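/- arXiv:1411.6304 — 4 statements merged into one kernel-verified Lean document; each statement's English description precedes it below -/
import Mathlib

section
/- Let λ>0 and let f_∞ be a probability density on the cylinder with M := sup_{k∈ℤ,η∈ℝ} |f̂_∞(k,η)| e^{λ(|k|+|η|)} < ∞ and with f_∞ continuously differentiable with bounded gradient. Then there exists μ₀>0 such that for every 0<μ<μ₀ there exist a measurable z:[0,∞)→ℂ, a map Θ:[0,∞)×ℝ×ℝ→ℝ which is an asymptotic characteristic for z, and a constant C>0, such that: (i) z(t) = ∫_{[0,2π)×ℝ} e^{iΘ(t,ϑ,ω)} f_∞(ϑ,ω) dϑ dω for all t≥0; (ii) |z(t)| ≤ C e^{−λt} for all t≥0; (iii) sup_{ϑ,ω} |Θ(t,ϑ,ω) − ϑ − ωt| ≤ C e^{−λt} for all t≥0; (iv) the function g(t,ϑ,ω) := f_∞(ϑ,ω) exp(−μ ∫_t^∞ Re(e^{iΘ(s,ϑ,ω)} · conj(z(s))) ds), which is the value along characteristics of a solution of the kinetic Kuramoto equation, satisfies sup_{ϑ,ω} |g(t,ϑ,ω) − f_∞(Θ(t,ϑ,ω) − ωt, ω)| ≤ C e^{−λt}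 for all t≥0. -/
open MeasureTheory

noncomputable section

/-- `Θ` is an asymptotic characteristic for the order parameter `z`, with coupling `μ`:
`Θ(t,ϑ,ω) = ϑ + ωt + μ ∫_t^∞ Im(e^{iΘ(s,ϑ,ω)} conj(z s)) ds` for all `t ≥ 0`. -/
def IsAsymChar (μ : ℝ) (z : ℝ → ℂ) (Θ : ℝ → ℝ → ℝ → ℝ) : Prop :=
  ∀ t : ℝ, 0 ≤ t → ∀ ϑ ω : ℝ,
    Θ t ϑ ω = ϑ + ω * t + μ * ∫ s in Set.Ioi t,
      (Complex.exp (Complex.I * (Θ s ϑ ω : ℂ)) * (starRingEnd ℂ) (z s)).im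

/-- The reference measure on the cylinder `[0, 2π) × ℝ`. -/
def cylMeasure : Measure (ℝ × ℝ) :=
  (volume.restrict (Set.Ico 0 (2 * Real.pi))).prod volume

/-- `f` is a probability density on the cylinder: nonnegative, `2π`-periodic in the
first variable, with total integral one over `[0, 2π) × ℝ`. -/
structure IsCylDensity (f : ℝ → ℝ → ℝ) : Prop where
  nonneg : ∀ ϑ ω : ℝ, 0 ≤ f ϑ ω
  periodic : ∀ ϑ ω : ℝ, f (ϑ + 2 * Real.pi) ω = f ϑ ω
  integrable : Integrable (fun p : ℝ × ℝ => f p.1 p.2) cylMeasure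
  integral_one : (∫ p : ℝ × ℝ, f p.1 p.2 ∂cylMeasure) = 1

/-- The Fourier transform `f̂(k,η) = ∫_{[0,2π)×ℝ} f(ϑ,ω) e^{-i(kϑ+ηω)} dϑ dω`. -/
def fHat (f : ℝ → ℝ → ℝ) (k : ℤ) (η : ℝ) : ℂ :=
  ∫ p : ℝ × ℝ, (f p.1 p.2 : ℂ) *
    Complex.exp (-Complex.I * (((k : ℝ) * p.1 + η * p.2 : ℝ) : ℂ)) ∂cylMeasure

/-- The order parameter `w(t) = ∫_{[0,2π)×ℝ} e^{iΘ(t,ϑ,ω)} f(ϑ,ω) dϑ dω`. -/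
def orderParam (f : ℝ → ℝ → ℝ) (Θ : ℝ → ℝ → ℝ → ℝ) (t : ℝ) : ℂ :=
  ∫ p : ℝ × ℝ, Complex.exp (Complex.I * (Θ t p.1 p.2 : ℂ)) * (f p.1 p.2 : ℂ) ∂cylMeasure

/-!
Write `Θ = ϑ + ωt + ε(t, ϑ, ω)` and look for the correction `ε` as a fixed point of
`ε ↦ μ ∫_t^∞ Im(e^{iΘ} conj z_ε)`, where `z_ε` is the order parameter along `Θ`. For the weighted
norm `sup |ε(t, ·)| e^{lt}` this map sends the ball of radius `1/2` into itself and is a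
`1/2`-contraction once `4μ(M + 1) ≤ l`: along the free flow the order parameter is `f̂(-1, -t)`,
of size `M e^{-lt}` by analyticity, and since `f` is a probability density, moving the
characteristics by `ε` moves the order parameter by at most `sup |ε|`. Picard iteration from `0`
converges pointwise, so measurability survives the limit. The estimate on the density then
follows because `f` is Lipschitz, hence bounded.
-/

open Set Filter Topology ComplexConjugate

theorem norm_exp_I_mul_sub_exp_I_mul_le (a b : ℝ) :
    ‖Complex.exp (Complex.I * a) - Complex.exp (Complex.I * b)‖ ≤ |a - b| := by
  have h : Complex.exp (Complex.I * a) - Complex.exp (Complex.I * b)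
      = Complex.exp (Complex.I * b) * (Complex.exp (Complex.I * ↑(a - b)) - 1) := by
    rw [mul_sub, ← Complex.exp_add]; push_cast; ring_nf
  rw [h, norm_mul, Complex.norm_exp_I_mul_ofReal, one_mul, ← Real.norm_eq_abs]
  exact Real.norm_exp_I_mul_ofReal_sub_one_le

theorem norm_setIntegral_Ioi_le_of_norm_le_exp {E : Type*} [NormedAddCommGroup E]
    [NormedSpace ℝ E] {φ : ℝ → E} {A l t : ℝ} (hl : 0 < l)
    (h : ∀ s ∈ Ioi t, ‖φ s‖ ≤ A * Real.exp (-l * s)) :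
    ‖∫ s in Ioi t, φ s‖ ≤ A * Real.exp (-l * t) / l := by
  calc ‖∫ s in Ioi t, φ s‖ ≤ ∫ s in Ioi t, A * Real.exp (-l * s) :=
        norm_integral_le_of_norm_le ((exp_neg_integrableOn_Ioi t hl).const_mul A)
          ((ae_restrict_mem measurableSet_Ioi).mono h)
    _ = A * Real.exp (-l * t) / l := by
        rw [integral_const_mul, integral_exp_mul_Ioi (neg_lt_zero.2 hl)]
        field_simp

theorem integrableOn_Ioi_of_norm_le_exp {E : Type*} [NormedAddCommGroup E]
    {φ : ℝ → E} {A l t : ℝ} (hl : 0 < l) (hφ : AEStronglyMeasurable φ)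
    (h : ∀ s ∈ Ioi t, ‖φ s‖ ≤ A * Real.exp (-l * s)) : IntegrableOn φ (Ioi t) :=
  ((exp_neg_integrableOn_Ioi t hl).const_mul A).mono' hφ.restrict
    ((ae_restrict_mem measurableSet_Ioi).mono h)

theorem exists_lipschitzWith_of_norm_fderiv_le {E F : Type*} [NormedAddCommGroup E]
    [NormedSpace ℝ E] [NormedAddCommGroup F] [NormedSpace ℝ F] {g : E → F}
    (hg : Differentiable ℝ g) (h : ∃ K : ℝ, ∀ x, ‖fderiv ℝ g x‖ ≤ K) :
    ∃ K : NNReal, LipschitzWith K g := by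
  obtain ⟨K, hK⟩ := h
  refine ⟨K.toNNReal, lipschitzWith_of_nnnorm_fderiv_le hg fun x => ?_⟩
  rw [← NNReal.coe_le_coe, coe_nnnorm]
  exact (hK x).trans (le_max_left _ _)

theorem abs_mul_exp_sub_le {a b x : ℝ} (hx : |x| ≤ 1) :
    |a * Real.exp x - b| ≤ |a| * (2 * |x|) + |a - b| := by
  calc |a * Real.exp x - b| = |a * (Real.exp x - 1) + (a - b)| := by ring_nf
    _ ≤ |a| * (2 * |x|) + |a - b| := by
        grw [abs_add_le, abs_mul, Real.abs_exp_sub_one_le hx]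

theorem exists_fixedPoint_of_weighted_contraction {X : Type*} {S : Set (X → ℝ)}
    {P : (X → ℝ) → X → ℝ} {w : X → ℝ} (hS : IsSeqClosed S) (h0 : 0 ∈ S)
    (hPS : ∀ ε ∈ S, P ε ∈ S) (hP0 : ∀ x, |P 0 x| ≤ w x)
    (hP : ∀ ε ∈ S, ∀ ε' ∈ S, ∀ c : ℝ, (∀ x, |ε x - ε' x| ≤ c * w x) →
      ∀ x, |P ε x - P ε' x| ≤ c / 2 * w x) :
    ∃ ε ∈ S, P ε = ε := by
  set u : ℕ → X → ℝ := fun n => P^[n] 0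
  have hu : ∀ n, u n ∈ S := fun n => by
    induction n with
    | zero => exact h0
    | succ n ih => simpa only [u, Function.iterate_succ_apply'] using hPS _ ih
  have hsucc : ∀ n, u (n + 1) = P (u n) := fun n => Function.iterate_succ_apply' P n 0
  have hstep : ∀ n x, |u n x - u (n + 1) x| ≤ 1 / 2 ^ n * w x := fun n => by
    induction n with
    | zero => intro x; simpa [u, abs_sub_comm] using hP0 x
    | succ n ih =>
        intro x
        rw [hsucc, hsucc (n + 1), pow_succ, ← div_div]
        exact hP _ (hu n) _ (hu (n + 1)) _ ih x
  have hdist : ∀ x n, dist (u n x) (u (n + 1) x) ≤ 2 * w x / 2 / 2 ^ n := fun x n => by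
    rw [Real.dist_eq]; convert hstep n x using 1; ring
  choose g hg using fun x => cauchySeq_tendsto_of_complete (cauchySeq_of_le_geometric_two (hdist x))
  have hgS : g ∈ S := hS hu (tendsto_pi_nhds.2 hg)
  refine ⟨g, hgS, funext fun x => tendsto_nhds_unique ?_ ((tendsto_add_atTop_iff_nat 1).2 (hg x))⟩
  simp only [hsucc]
  have hgeom : Tendsto (fun n : ℕ => (1 / 2 : ℝ) ^ n * w x) atTop (𝓝 0) := by
    simpa using (tendsto_pow_atTop_nhds_zero_of_lt_one (by norm_num : (0:ℝ) ≤ 1 / 2)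
      (by norm_num)).mul_const (w x)
  refine tendsto_iff_dist_tendsto_zero.2
    (squeeze_zero (fun _ => dist_nonneg) (fun n => ?_) hgeom)
  have htail : ∀ y, |u n y - g y| ≤ 2 / 2 ^ n * w y := fun y => by
    have := dist_le_of_le_geometric_two_of_tendsto (hdist y) (hg y) n
    rw [Real.dist_eq] at this; convert this using 1; ring
  rw [Real.dist_eq]
  convert hP _ (hu n) _ hgS _ htail x using 1
  rw [one_div_pow]; ring

theorem IsCylDensity.le_of_lipschitzWith {f : ℝ → ℝ → ℝ} (hf : IsCylDensity f) {K : NNReal}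
    (hK : LipschitzWith K fun p : ℝ × ℝ => f p.1 p.2) (ϑ ω : ℝ) :
    f ϑ ω ≤ 2 * Real.pi * K + 1 := by
  have h2π : 0 < 2 * Real.pi := by positivity
  obtain ⟨ϑ₀, hϑ₀, hf₀⟩ : ∃ ϑ₀ ∈ Ico 0 (2 * Real.pi), f ϑ₀ ω = f ϑ ω := by
    refine ⟨toIcoMod h2π 0 ϑ, by simpa using toIcoMod_mem_Ico h2π 0 ϑ, ?_⟩
    rw [← self_sub_toIcoDiv_zsmul]
    exact Function.Periodic.sub_zsmul_eq (f := (f · ω)) (fun ϑ => hf.periodic ϑ ω) _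
  set S : Set (ℝ × ℝ) := Ico 0 (2 * Real.pi) ×ˢ Ico ω (ω + 2 * Real.pi)
  have hlow : ∀ p ∈ S, f ϑ ω - 2 * Real.pi * K ≤ f p.1 p.2 := by
    rintro p ⟨hp₁, hp₂⟩
    have hdist : dist p (ϑ₀, ω) ≤ 2 * Real.pi := by
      rw [Prod.dist_eq, Real.dist_eq, Real.dist_eq, max_le_iff, abs_le, abs_le]
      simp only [mem_Ico] at hp₁ hp₂ hϑ₀
      refine ⟨⟨?_, ?_⟩, ?_, ?_⟩ <;> linarith
    have := (abs_le.1 ((Real.dist_eq _ _).symm.le.trans (hK.dist_le_mul p (ϑ₀, ω)))).1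
    rw [← hf₀]
    nlinarith [mul_le_mul_of_nonneg_left hdist K.coe_nonneg]
  have hS : cylMeasure S = ENNReal.ofReal (2 * Real.pi) * ENNReal.ofReal (2 * Real.pi) := by
    rw [cylMeasure, Measure.prod_prod, Measure.restrict_apply measurableSet_Ico, inter_self,
      Real.volume_Ico, Real.volume_Ico]
    ring_nf
  have hSreal : cylMeasure.real S = 2 * Real.pi * (2 * Real.pi) := by
    rw [measureReal_def, hS, ENNReal.toReal_mul, ENNReal.toReal_ofReal h2π.le]
  have hint : cylMeasure.real S * (f ϑ ω - 2 * Real.pi * K) ≤ 1 := by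
    calc cylMeasure.real S * (f ϑ ω - 2 * Real.pi * K)
        ≤ ∫ p in S, f p.1 p.2 ∂cylMeasure := by
          simpa using setIntegral_ge_of_const_le (measurableSet_Ico.prod measurableSet_Ico)
            (by rw [hS]; finiteness) hlow hf.integrable.integrableOn
      _ ≤ ∫ p, f p.1 p.2 ∂cylMeasure :=
          setIntegral_le_integral hf.integrable (.of_forall fun p => hf.nonneg p.1 p.2)
      _ = 1 := hf.integral_one
  rw [hSreal] at hint
  nlinarith [Real.pi_gt_three]

instance : SigmaFinite cylMeasure := by
  unfold cylMeasure; infer_instance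

def FourierExpBound (f : ℝ → ℝ → ℝ) (l M : ℝ) : Prop :=
  ∀ (k : ℤ) (η : ℝ), ‖fHat f k η‖ * Real.exp (l * (|(k : ℝ)| + |η|)) ≤ M

section OrderParameter

variable {f : ℝ → ℝ → ℝ}

theorem norm_orderParam_integrand (hf : IsCylDensity f) (a : ℝ) (p : ℝ × ℝ) :
    ‖Complex.exp (Complex.I * a) * (f p.1 p.2 : ℂ)‖ = f p.1 p.2 := by
  rw [norm_mul, Complex.norm_exp_I_mul_ofReal, one_mul, Complex.norm_real, Real.norm_eq_abs,
    abs_of_nonneg (hf.nonneg _ _)]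

theorem norm_orderParam_le_one (hf : IsCylDensity f) (Θ : ℝ → ℝ → ℝ → ℝ) (t : ℝ) :
    ‖orderParam f Θ t‖ ≤ 1 :=
  hf.integral_one ▸ norm_integral_le_of_norm_le hf.integrable
    (.of_forall fun p => (norm_orderParam_integrand hf _ p).le)

theorem integrable_orderParam_integrand (hf : IsCylDensity f) {Θ : ℝ × ℝ → ℝ}
    (hΘ : Measurable Θ) :
    Integrable (fun p : ℝ × ℝ => Complex.exp (Complex.I * Θ p) * (f p.1 p.2 : ℂ)) cylMeasure :=
  hf.integrable.mono' ((by fun_prop : Measurable fun p => Complex.exp (Complex.I * Θ p))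
      |>.aestronglyMeasurable.mul (Complex.continuous_ofReal.comp_aestronglyMeasurable
        hf.integrable.aestronglyMeasurable))
    (.of_forall fun p => (norm_orderParam_integrand hf _ p).le)

theorem norm_orderParam_sub_le (hf : IsCylDensity f) {Θ Θ' : ℝ → ℝ → ℝ → ℝ} {t c : ℝ}
    (hΘ : Measurable fun p : ℝ × ℝ => Θ t p.1 p.2)
    (hΘ' : Measurable fun p : ℝ × ℝ => Θ' t p.1 p.2)
    (h : ∀ ϑ ω, |Θ t ϑ ω - Θ' t ϑ ω| ≤ c) :
    ‖orderParam f Θ t - orderParam f Θ' t‖ ≤ c := by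
  rw [orderParam, orderParam, ← integral_sub (integrable_orderParam_integrand hf hΘ)
    (integrable_orderParam_integrand hf hΘ')]
  calc _ ≤ ∫ p : ℝ × ℝ, c * f p.1 p.2 ∂cylMeasure := by
        refine norm_integral_le_of_norm_le (hf.integrable.const_mul c) (.of_forall fun p => ?_)
        rw [← sub_mul, norm_mul, Complex.norm_real, Real.norm_eq_abs,
          abs_of_nonneg (hf.nonneg _ _)]
        exact mul_le_mul_of_nonneg_right
          ((norm_exp_I_mul_sub_exp_I_mul_le _ _).trans (h p.1 p.2)) (hf.nonneg _ _)
    _ = c := by rw [integral_const_mul, hf.integral_one, mul_one]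

theorem measurable_orderParam (hfm : Measurable fun p : ℝ × ℝ => f p.1 p.2)
    {Θ : ℝ → ℝ → ℝ → ℝ} (hΘ : Measurable fun q : ℝ × ℝ × ℝ => Θ q.1 q.2.1 q.2.2) :
    Measurable (orderParam f Θ) := by
  have : Measurable fun q : ℝ × (ℝ × ℝ) =>
      Complex.exp (Complex.I * Θ q.1 q.2.1 q.2.2) * (f q.2.1 q.2.2 : ℂ) := by
    have : Measurable fun q : ℝ × (ℝ × ℝ) => f q.2.1 q.2.2 := hfm.comp measurable_snd
    fun_prop
  exact this.stronglyMeasurable.integral_prod_right'.measurable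

theorem FourierExpBound.nonneg {l M : ℝ} (hM : FourierExpBound f l M) : 0 ≤ M :=
  (mul_nonneg (norm_nonneg _) (Real.exp_pos _).le).trans (hM 0 0)

theorem FourierExpBound.norm_fHat_le {l M : ℝ} (hM : FourierExpBound f l M) (k : ℤ) (η : ℝ) :
    ‖fHat f k η‖ ≤ M * Real.exp (-(l * (|(k : ℝ)| + |η|))) := by
  rw [Real.exp_neg, ← div_eq_mul_inv, le_div_iff₀ (Real.exp_pos _)]
  exact hM k η

theorem orderParam_freeFlow (t : ℝ) :
    orderParam f (fun t ϑ ω => ϑ + ω * t) t = fHat f (-1) (-t) := by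
  simp only [orderParam, fHat]
  congr 1 with p
  rw [mul_comm]
  push_cast
  ring_nf

theorem norm_orderParam_freeFlow_le {l M : ℝ} (hl : 0 < l) (hM : FourierExpBound f l M)
    (t : ℝ) :
    ‖orderParam f (fun t ϑ ω => ϑ + ω * t) t‖ ≤ M * Real.exp (-l * t) := by
  have hM0 : 0 ≤ M := hM.nonneg
  rw [orderParam_freeFlow]
  refine (hM.norm_fHat_le _ _).trans (mul_le_mul_of_nonneg_left (Real.exp_le_exp.2 ?_) hM0)
  push_cast
  rw [abs_neg, abs_neg, abs_one]
  nlinarith [le_abs_self t]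

end OrderParameter

def charOf (ε : ℝ × ℝ × ℝ → ℝ) : ℝ → ℝ → ℝ → ℝ :=
  fun t ϑ ω => ϑ + ω * t + ε (t, ϑ, ω)

def meanField (f : ℝ → ℝ → ℝ) (ε : ℝ × ℝ × ℝ → ℝ) (s ϑ ω : ℝ) : ℂ :=
  Complex.exp (Complex.I * charOf ε s ϑ ω) * conj (orderParam f (charOf ε) s)

def correctionMap (μ : ℝ) (f : ℝ → ℝ → ℝ) (ε : ℝ × ℝ × ℝ → ℝ) : ℝ × ℝ × ℝ → ℝ :=
  fun q => μ * ∫ s in Ioi q.1, (meanField f ε s q.2.1 q.2.2).im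

def admissibleCorrections (l : ℝ) : Set (ℝ × ℝ × ℝ → ℝ) :=
  {ε | Measurable ε ∧ ∀ q, |ε q| ≤ Real.exp (-l * q.1) / 2}

section Correction

variable {f : ℝ → ℝ → ℝ} {l M μ : ℝ} {ε ε' : ℝ × ℝ × ℝ → ℝ}

theorem measurable_charOf (hε : Measurable ε) :
    Measurable fun q : ℝ × ℝ × ℝ => charOf ε q.1 q.2.1 q.2.2 := by
  unfold charOf; fun_prop

theorem charOf_zero : charOf 0 = fun t ϑ ω => ϑ + ω * t := by
  funext t ϑ ω; simp [charOf]

theorem isSeqClosed_admissibleCorrections : IsSeqClosed (admissibleCorrections l) :=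
  fun _ _ hu hlim => ⟨measurable_of_tendsto_metrizable (fun n => (hu n).1) hlim,
    fun q => le_of_tendsto (((continuous_apply q).tendsto _).comp hlim).abs
      (.of_forall fun n => (hu n).2 q)⟩

theorem zero_mem_admissibleCorrections : 0 ∈ admissibleCorrections l :=
  ⟨measurable_const, fun q => by simp only [Pi.zero_apply, abs_zero]; positivity⟩

theorem norm_orderParam_charOf_le (hl : 0 < l) (hf : IsCylDensity f)
    (hM : FourierExpBound f l M) (hε : ε ∈ admissibleCorrections l) (t : ℝ) :
    ‖orderParam f (charOf ε) t‖ ≤ (M + 1) * Real.exp (-l * t) := by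
  have hdiff := norm_orderParam_sub_le hf (t := t) (c := Real.exp (-l * t) / 2)
    ((measurable_charOf hε.1).comp measurable_prodMk_left)
    ((measurable_charOf measurable_zero).comp measurable_prodMk_left)
    fun ϑ ω => by simpa [charOf] using hε.2 (t, ϑ, ω)
  rw [charOf_zero] at hdiff
  calc _ ≤ ‖orderParam f (charOf ε) t - orderParam f (fun t ϑ ω => ϑ + ω * t) t‖
        + ‖orderParam f (fun t ϑ ω => ϑ + ω * t) t‖ := norm_le_norm_sub_add _ _
    _ ≤ Real.exp (-l * t) / 2 + M * Real.exp (-l * t) :=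
        add_le_add hdiff (norm_orderParam_freeFlow_le hl hM t)
    _ ≤ (M + 1) * Real.exp (-l * t) := by nlinarith [Real.exp_pos (-l * t)]

theorem norm_meanField_le (hl : 0 < l) (hf : IsCylDensity f)
    (hM : FourierExpBound f l M) (hε : ε ∈ admissibleCorrections l) (s ϑ ω : ℝ) :
    ‖meanField f ε s ϑ ω‖ ≤ (M + 1) * Real.exp (-l * s) := by
  rw [meanField, norm_mul, Complex.norm_exp_I_mul_ofReal, one_mul, Complex.norm_conj]
  exact norm_orderParam_charOf_le hl hf hM hε s

theorem measurable_meanField (hfm : Measurable fun p : ℝ × ℝ => f p.1 p.2)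
    (hε : Measurable ε) : Measurable fun q : ℝ × ℝ × ℝ => meanField f ε q.1 q.2.1 q.2.2 := by
  have hΘ := measurable_charOf hε
  have hz : Measurable fun q : ℝ × ℝ × ℝ => orderParam f (charOf ε) q.1 :=
    (measurable_orderParam hfm hΘ).comp measurable_fst
  unfold meanField
  fun_prop

theorem norm_meanField_sub_le (hf : IsCylDensity f) (hε : Measurable ε) (hε' : Measurable ε')
    {c : ℝ} (h : ∀ q, |ε q - ε' q| ≤ c * Real.exp (-l * q.1)) (s ϑ ω : ℝ) :
    ‖meanField f ε s ϑ ω - meanField f ε' s ϑ ω‖ ≤ 2 * c * Real.exp (-l * s) := by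
  have hc : 0 ≤ c := nonneg_of_mul_nonneg_left ((abs_nonneg _).trans (h 0)) (Real.exp_pos _)
  have hphase : ‖Complex.exp (Complex.I * charOf ε s ϑ ω)
      - Complex.exp (Complex.I * charOf ε' s ϑ ω)‖ ≤ c * Real.exp (-l * s) :=
    (norm_exp_I_mul_sub_exp_I_mul_le _ _).trans (by simpa [charOf] using h (s, ϑ, ω))
  have horder : ‖orderParam f (charOf ε) s - orderParam f (charOf ε') s‖
      ≤ c * Real.exp (-l * s) :=
    norm_orderParam_sub_le hf ((measurable_charOf hε).comp measurable_prodMk_left)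
      ((measurable_charOf hε').comp measurable_prodMk_left)
      fun ϑ ω => by simpa [charOf] using h (s, ϑ, ω)
  have hsplit : meanField f ε s ϑ ω - meanField f ε' s ϑ ω
      = (Complex.exp (Complex.I * charOf ε s ϑ ω) - Complex.exp (Complex.I * charOf ε' s ϑ ω))
          * conj (orderParam f (charOf ε) s)
        + Complex.exp (Complex.I * charOf ε' s ϑ ω)
          * conj (orderParam f (charOf ε) s - orderParam f (charOf ε') s) := by
    simp only [meanField, map_sub]; ring
  rw [hsplit]
  -- `‖z‖ ≤ 1` rather than its decay, since `e^{-2ls} ≤ e^{-ls}` fails for the times `s < 0`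
  calc _ ≤ c * Real.exp (-l * s) * 1 + 1 * (c * Real.exp (-l * s)) := by
        grw [norm_add_le, norm_mul, norm_mul, Complex.norm_conj, Complex.norm_conj,
          Complex.norm_exp_I_mul_ofReal, hphase, horder, norm_orderParam_le_one hf]
    _ = 2 * c * Real.exp (-l * s) := by ring

theorem abs_mul_integral_meanField_le (hl : 0 < l) (hf : IsCylDensity f)
    (hM : FourierExpBound f l M)
    (hμ : 0 ≤ μ) (hsmall : 2 * μ * (M + 1) ≤ l) (hε : ε ∈ admissibleCorrections l)
    {g : ℂ → ℝ} (hg : ∀ z, |g z| ≤ ‖z‖) (t ϑ ω : ℝ) :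
    |μ * ∫ s in Ioi t, g (meanField f ε s ϑ ω)| ≤ Real.exp (-l * t) / 2 := by
  have hint : ‖∫ s in Ioi t, g (meanField f ε s ϑ ω)‖ ≤ (M + 1) * Real.exp (-l * t) / l :=
    norm_setIntegral_Ioi_le_of_norm_le_exp hl fun s _ =>
      (hg _).trans (norm_meanField_le hl hf hM hε s ϑ ω)
  rw [Real.norm_eq_abs] at hint
  rw [abs_mul, abs_of_nonneg hμ]
  calc _ ≤ μ * ((M + 1) * Real.exp (-l * t) / l) := by gcongr
    _ = 2 * μ * (M + 1) / l * (Real.exp (-l * t) / 2) := by ring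
    _ ≤ Real.exp (-l * t) / 2 := by
        refine mul_le_of_le_one_left (by positivity) ?_
        rwa [div_le_one hl]

theorem measurable_correctionMap (hfm : Measurable fun p : ℝ × ℝ => f p.1 p.2)
    (hε : Measurable ε) : Measurable (correctionMap μ f ε) := by
  have hF : Measurable fun p : (ℝ × ℝ × ℝ) × ℝ => {p : (ℝ × ℝ × ℝ) × ℝ | p.1.1 < p.2}.indicator
      (fun p => (meanField f ε p.2 p.1.2.1 p.1.2.2).im) p :=
    (Complex.measurable_im.comp ((measurable_meanField hfm hε).comp
      (measurable_snd.prodMk measurable_fst.snd))).indicator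
      (measurableSet_lt measurable_fst.fst measurable_snd)
  have heq : correctionMap μ f ε = fun q => μ * ∫ s, {p : (ℝ × ℝ × ℝ) × ℝ | p.1.1 < p.2}.indicator
      (fun p => (meanField f ε p.2 p.1.2.1 p.1.2.2).im) (q, s) := by
    funext q
    rw [correctionMap, ← integral_indicator measurableSet_Ioi]
    rfl
  rw [heq]
  exact (hF.stronglyMeasurable.integral_prod_right' (ν := volume)).measurable.const_mul μ

theorem abs_correctionMap_sub_le (hl : 0 < l) (hf : IsCylDensity f)
    (hfm : Measurable fun p : ℝ × ℝ => f p.1 p.2) (hM : FourierExpBound f l M) (hμ : 0 ≤ μ)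
    (hsmall : 4 * μ ≤ l) (hε : ε ∈ admissibleCorrections l)
    (hε' : ε' ∈ admissibleCorrections l) {c : ℝ}
    (h : ∀ q, |ε q - ε' q| ≤ c * Real.exp (-l * q.1)) (q : ℝ × ℝ × ℝ) :
    |correctionMap μ f ε q - correctionMap μ f ε' q| ≤ c / 2 * Real.exp (-l * q.1) := by
  obtain ⟨t, ϑ, ω⟩ := q
  have hc : 0 ≤ c := nonneg_of_mul_nonneg_left ((abs_nonneg _).trans (h 0)) (Real.exp_pos _)
  have hint : ∀ {ε}, ε ∈ admissibleCorrections l →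
      IntegrableOn (fun s => (meanField f ε s ϑ ω).im) (Ioi t) := fun hε =>
    integrableOn_Ioi_of_norm_le_exp hl
      ((Complex.measurable_im.comp ((measurable_meanField hfm hε.1).comp
        (measurable_id.prodMk measurable_const : Measurable fun s : ℝ => (s, ϑ, ω))))
        |>.aestronglyMeasurable)
      fun s _ => (Complex.abs_im_le_norm _).trans (norm_meanField_le hl hf hM hε s ϑ ω)
  have hdiff : ‖∫ s in Ioi t, ((meanField f ε s ϑ ω).im - (meanField f ε' s ϑ ω).im)‖
      ≤ 2 * c * Real.exp (-l * t) / l :=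
    norm_setIntegral_Ioi_le_of_norm_le_exp hl fun s _ => by
      rw [← Complex.sub_im, Real.norm_eq_abs]
      exact (Complex.abs_im_le_norm _).trans (norm_meanField_sub_le hf hε.1 hε'.1 h s ϑ ω)
  rw [Real.norm_eq_abs] at hdiff
  rw [correctionMap, correctionMap, ← mul_sub, ← integral_sub (hint hε) (hint hε'), abs_mul,
    abs_of_nonneg hμ]
  calc _ ≤ μ * (2 * c * Real.exp (-l * t) / l) := by gcongr
    _ = 4 * μ / l * (c / 2 * Real.exp (-l * t)) := by ring
    _ ≤ c / 2 * Real.exp (-l * t) := by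
        refine mul_le_of_le_one_left (by positivity) ?_
        rwa [div_le_one hl]

theorem exists_correctionMap_fixedPoint (hl : 0 < l) (hf : IsCylDensity f)
    (hfm : Measurable fun p : ℝ × ℝ => f p.1 p.2) (hM : FourierExpBound f l M) (hμ : 0 ≤ μ)
    (hsmall : 4 * μ * (M + 1) ≤ l) :
    ∃ ε ∈ admissibleCorrections l, correctionMap μ f ε = ε := by
  have hM0 : 0 ≤ M := hM.nonneg
  have hmaps : ∀ ε ∈ admissibleCorrections l, correctionMap μ f ε ∈ admissibleCorrections l :=
    fun ε hε => ⟨measurable_correctionMap hfm hε.1, fun q =>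
      abs_mul_integral_meanField_le hl hf hM hμ (by nlinarith) hε Complex.abs_im_le_norm _ _ _⟩
  refine exists_fixedPoint_of_weighted_contraction isSeqClosed_admissibleCorrections
    zero_mem_admissibleCorrections hmaps (fun q => ?_)
    fun ε hε ε' hε' c h => abs_correctionMap_sub_le hl hf hfm hM hμ (by nlinarith) hε hε' h
  exact ((hmaps 0 zero_mem_admissibleCorrections).2 q).trans (half_le_self (Real.exp_pos _).le)

theorem isAsymChar_charOf (h : correctionMap μ f ε = ε) :
    IsAsymChar μ (orderParam f (charOf ε)) (charOf ε) := by
  intro t _ ϑ ω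
  conv_lhs => rw [charOf, ← h]
  rfl

end Correction

theorem abs_density_sub_le {f : ℝ → ℝ → ℝ} {l M μ : ℝ} {ε : ℝ × ℝ × ℝ → ℝ} (hl : 0 < l)
    (hf : IsCylDensity f) (hM : FourierExpBound f l M)
    {K : NNReal} (hK : LipschitzWith K fun p : ℝ × ℝ => f p.1 p.2) (hμ : 0 ≤ μ)
    (hsmall : 2 * μ * (M + 1) ≤ l) (hε : ε ∈ admissibleCorrections l) {t : ℝ} (ht : 0 ≤ t)
    (ϑ ω : ℝ) :
    |f ϑ ω * Real.exp (-μ * ∫ s in Ioi t, (meanField f ε s ϑ ω).re)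
        - f (charOf ε t ϑ ω - ω * t) ω| ≤ (2 * Real.pi * K + 1 + K) * Real.exp (-l * t) := by
  have hx : |-μ * ∫ s in Ioi t, (meanField f ε s ϑ ω).re| ≤ Real.exp (-l * t) / 2 := by
    simpa only [neg_mul, abs_neg] using
      abs_mul_integral_meanField_le hl hf hM hμ hsmall hε Complex.abs_re_le_norm t ϑ ω
  have he : Real.exp (-l * t) ≤ 1 := Real.exp_le_one_iff.2 (by nlinarith)
  have hshift : charOf ε t ϑ ω - ω * t = ϑ + ε (t, ϑ, ω) := by simp only [charOf]; ring
  have hlip : |f ϑ ω - f (ϑ + ε (t, ϑ, ω)) ω| ≤ K * (Real.exp (-l * t) / 2) := by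
    have := hK.dist_le_mul (ϑ, ω) (ϑ + ε (t, ϑ, ω), ω)
    simp only [Prod.dist_eq, Real.dist_eq, sub_self, abs_zero, sub_add_cancel_left, abs_neg,
      abs_nonneg, max_eq_left] at this
    exact this.trans (mul_le_mul_of_nonneg_left (hε.2 _) K.coe_nonneg)
  rw [hshift]
  calc _ ≤ |f ϑ ω| * (2 * |-μ * ∫ s in Ioi t, (meanField f ε s ϑ ω).re|)
        + |f ϑ ω - f (ϑ + ε (t, ϑ, ω)) ω| := abs_mul_exp_sub_le (by linarith)
    _ ≤ (2 * Real.pi * K + 1) * (2 * (Real.exp (-l * t) / 2)) + K * (Real.exp (-l * t) / 2) := by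
        rw [abs_of_nonneg (hf.nonneg ϑ ω)]
        gcongr
        exact hf.le_of_lipschitzWith hK ϑ ω
    _ ≤ (2 * Real.pi * K + 1 + K) * Real.exp (-l * t) := by
        nlinarith [K.coe_nonneg, Real.exp_pos (-l * t)]

/-- Exponential dephasing towards a fixed analytic asymptotically free state
(Theorem 1 of the paper). -/
theorem exponential_dephasing
    (l : ℝ) (hl : 0 < l) (f : ℝ → ℝ → ℝ) (hf : IsCylDensity f)
    (M : ℝ) (hM : ∀ (k : ℤ) (η : ℝ),
      ‖fHat f k η‖ * Real.exp (l * (|(k : ℝ)| + |η|)) ≤ M)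
    (hreg : ContDiff ℝ 1 (fun p : ℝ × ℝ => f p.1 p.2))
    (hgrad : ∃ K : ℝ, ∀ p : ℝ × ℝ, ‖fderiv ℝ (fun q : ℝ × ℝ => f q.1 q.2) p‖ ≤ K) :
    ∃ μ₀ > (0 : ℝ), ∀ μ : ℝ, 0 < μ → μ < μ₀ →
      ∃ (z : ℝ → ℂ) (Θ : ℝ → ℝ → ℝ → ℝ) (C : ℝ),
        Measurable z ∧ IsAsymChar μ z Θ ∧ 0 < C ∧
        (∀ t : ℝ, 0 ≤ t → z t = orderParam f Θ t) ∧
        (∀ t : ℝ, 0 ≤ t → ‖z t‖ ≤ C * Real.exp (-l * t)) ∧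
        (∀ t : ℝ, 0 ≤ t → ∀ ϑ ω : ℝ, |Θ t ϑ ω - ϑ - ω * t| ≤ C * Real.exp (-l * t)) ∧
        (∀ t : ℝ, 0 ≤ t → ∀ ϑ ω : ℝ,
          |f ϑ ω * Real.exp (-μ * ∫ s in Set.Ioi t,
              (Complex.exp (Complex.I * (Θ s ϑ ω : ℂ)) * (starRingEnd ℂ) (z s)).re)
            - f (Θ t ϑ ω - ω * t) ω| ≤ C * Real.exp (-l * t)) := by
  obtain ⟨K, hlip⟩ := exists_lipschitzWith_of_norm_fderiv_le (hreg.differentiable one_ne_zero) hgrad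
  have hfm : Measurable fun p : ℝ × ℝ => f p.1 p.2 := hreg.continuous.measurable
  have hM0 : 0 ≤ M := FourierExpBound.nonneg hM
  refine ⟨l / (4 * (M + 1)), by positivity, fun μ hμ hμ₀ => ?_⟩
  have hsmall : 4 * μ * (M + 1) ≤ l := by
    rw [lt_div_iff₀ (by positivity)] at hμ₀; linarith
  obtain ⟨ε, hε, hfix⟩ := exists_correctionMap_fixedPoint hl hf hfm hM hμ.le hsmall
  have hπK : 0 ≤ 2 * Real.pi * K := by positivity
  refine ⟨orderParam f (charOf ε), charOf ε, M + 2 + 2 * Real.pi * K + K,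
    measurable_orderParam hfm (measurable_charOf hε.1), isAsymChar_charOf hfix, by positivity,
    fun _ _ => rfl, fun t _ => ?_, fun t _ ϑ ω => ?_, fun t ht ϑ ω => ?_⟩
  · exact (norm_orderParam_charOf_le hl hf hM hε t).trans
      (mul_le_mul_of_nonneg_right (by linarith [K.coe_nonneg]) (Real.exp_pos _).le)
  · have : charOf ε t ϑ ω - ϑ - ω * t = ε (t, ϑ, ω) := by simp only [charOf]; ring
    rw [this]
    exact (hε.2 (t, ϑ, ω)).trans <| (half_le_self (Real.exp_pos _).le).trans
      (le_mul_of_one_le_left (Real.exp_pos _).le (by linarith [K.coe_nonneg]))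
  · exact (abs_density_sub_le hl hf hM hlip hμ.le (by nlinarith) hε ht ϑ ω).trans
      (mul_le_mul_of_nonneg_right (by linarith) (Real.exp_pos _).le)
end
end

section
/- Let λ>0, μ>0 and let z:[0,∞)→ℂ be measurable with ‖z‖_λ < ∞. If Θ:[0,∞)×ℝ×ℝ→ℝ satisfies ‖Θ(t,ϑ,ω) − ϑ − ωt‖_λ < ∞, then ‖F_z(Θ)(t,ϑ,ω) − ϑ − ωt‖_λ ≤ (μ/λ)‖z‖_λ. -/
open MeasureTheory

noncomputable section

/-- Weighted sup-norm `sup_{t ≥ 0} |z t| e^{l t}` for `z : ℝ → ℂ`. -/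
def expNormZ (l : ℝ) (z : ℝ → ℂ) : ℝ :=
  ⨆ t : {t : ℝ // 0 ≤ t}, ‖z t.1‖ * Real.exp (l * t.1)

/-- Finiteness of the weighted sup-norm for `z : ℝ → ℂ`. -/
def ExpBddZ (l : ℝ) (z : ℝ → ℂ) : Prop :=
  BddAbove (Set.range fun t : {t : ℝ // 0 ≤ t} => ‖z t.1‖ * Real.exp (l * t.1))

/-- Weighted sup-norm `sup_{t ≥ 0, ϑ, ω} |h t ϑ ω| e^{l t}`. -/
def expNormH (l : ℝ) (h : ℝ → ℝ → ℝ → ℂ) : ℝ :=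
  ⨆ p : {t : ℝ // 0 ≤ t} × ℝ × ℝ, ‖h p.1.1 p.2.1 p.2.2‖ * Real.exp (l * p.1.1)

/-- Finiteness of the weighted sup-norm for `h`. -/
def ExpBddH (l : ℝ) (h : ℝ → ℝ → ℝ → ℂ) : Prop :=
  BddAbove (Set.range fun p : {t : ℝ // 0 ≤ t} × ℝ × ℝ =>
    ‖h p.1.1 p.2.1 p.2.2‖ * Real.exp (l * p.1.1))

/-- The functional `F_z(Θ)(t,ϑ,ω) = ϑ + ωt + μ ∫_t^∞ Im(e^{iΘ(s,ϑ,ω)} conj(z s)) ds`. -/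
def Fz (μ : ℝ) (z : ℝ → ℂ) (Θ : ℝ → ℝ → ℝ → ℝ) (t ϑ ω : ℝ) : ℝ :=
  ϑ + ω * t + μ * ∫ s in Set.Ioi t,
    (Complex.exp (Complex.I * (Θ s ϑ ω : ℂ)) * (starRingEnd ℂ) (z s)).im

/-! Since `|Im (e^{iΘ} conj z)| ≤ |z s| ≤ ‖z‖_λ e^{-λs}`, the tail integral from `t` is at most
`‖z‖_λ e^{-λt} / λ`, and the weight `e^{λt}` cancels the decay. -/

lemma norm_le_expNormZ_mul_exp {l : ℝ} {z : ℝ → ℂ} (hzb : ExpBddZ l z) {s : ℝ} (hs : 0 ≤ s) :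
    ‖z s‖ ≤ expNormZ l z * Real.exp (-l * s) := by
  rw [neg_mul, Real.exp_neg, ← div_eq_mul_inv, le_div_iff₀ (Real.exp_pos _)]
  exact le_ciSup hzb (⟨s, hs⟩ : {t : ℝ // 0 ≤ t})

lemma norm_setIntegral_Ioi_le_expNormZ {E : Type*} [NormedAddCommGroup E] [NormedSpace ℝ E]
    {l : ℝ} (hl : 0 < l) {z : ℝ → ℂ} (hzb : ExpBddZ l z) {t : ℝ} (ht : 0 ≤ t) {f : ℝ → E}
    (hf : ∀ s, t < s → ‖f s‖ ≤ ‖z s‖) :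
    ‖∫ s in Set.Ioi t, f s‖ ≤ expNormZ l z / l * Real.exp (-l * t) := by
  have hdom : ∀ᵐ s ∂volume.restrict (Set.Ioi t), ‖f s‖ ≤ expNormZ l z * Real.exp (-l * s) := by
    refine (ae_restrict_iff' measurableSet_Ioi).2 (ae_of_all _ fun s hs => ?_)
    exact (hf s hs).trans (norm_le_expNormZ_mul_exp hzb (ht.trans hs.le))
  calc ‖∫ s in Set.Ioi t, f s‖
      ≤ ∫ s in Set.Ioi t, expNormZ l z * Real.exp (-l * s) :=
        norm_integral_le_of_norm_le ((exp_neg_integrableOn_Ioi t hl).const_mul _) hdom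
    _ = expNormZ l z / l * Real.exp (-l * t) := by
        rw [integral_const_mul, integral_exp_mul_Ioi (neg_neg_of_pos hl)]
        ring

lemma abs_im_exp_mul_conj_le (θ : ℝ) (w : ℂ) :
    |(Complex.exp (Complex.I * θ) * (starRingEnd ℂ) w).im| ≤ ‖w‖ :=
  (Complex.abs_im_le_norm _).trans_eq <| by
    rw [norm_mul, Complex.norm_exp_I_mul_ofReal, Complex.norm_conj, one_mul]

lemma Fz_sub_eq (μ : ℝ) (z : ℝ → ℂ) (Θ : ℝ → ℝ → ℝ → ℝ) (t ϑ ω : ℝ) :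
    Fz μ z Θ t ϑ ω - ϑ - ω * t = μ * ∫ s in Set.Ioi t,
      (Complex.exp (Complex.I * (Θ s ϑ ω : ℂ)) * (starRingEnd ℂ) (z s)).im := by
  unfold Fz
  ring

theorem Fz_maps_expSpace_general
    (l μ : ℝ) (hl : 0 < l) (hμ : 0 < μ) (z : ℝ → ℂ)
    (hzb : ExpBddZ l z) (Θ : ℝ → ℝ → ℝ → ℝ) :
    expNormH l (fun t ϑ ω => ((Fz μ z Θ t ϑ ω - ϑ - ω * t : ℝ) : ℂ)) ≤
      μ / l * expNormZ l z := by
  refine ciSup_le fun ⟨⟨t, ht⟩, ϑ, ω⟩ => ?_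
  have htail := norm_setIntegral_Ioi_le_expNormZ hl hzb ht
    (f := fun s => (Complex.exp (Complex.I * (Θ s ϑ ω : ℂ)) * (starRingEnd ℂ) (z s)).im)
    (fun s _ => abs_im_exp_mul_conj_le (Θ s ϑ ω) (z s))
  rw [Real.norm_eq_abs] at htail
  calc ‖((Fz μ z Θ t ϑ ω - ϑ - ω * t : ℝ) : ℂ)‖ * Real.exp (l * t)
      = μ * |∫ s in Set.Ioi t,
          (Complex.exp (Complex.I * (Θ s ϑ ω : ℂ)) * (starRingEnd ℂ) (z s)).im|
          * Real.exp (l * t) := by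
        rw [Complex.norm_real, Real.norm_eq_abs, Fz_sub_eq, abs_mul, abs_of_pos hμ]
    _ ≤ μ * (expNormZ l z / l * Real.exp (-l * t)) * Real.exp (l * t) := by gcongr
    _ = μ / l * expNormZ l z := by
        rw [mul_assoc, mul_assoc, ← Real.exp_add, neg_mul, neg_add_cancel, Real.exp_zero]
        ring

/-- `F_z` maps the affine space `ϑ + ωt + X_λ` into itself, with the stated bound. -/
theorem Fz_maps_expSpace
    (l μ : ℝ) (hl : 0 < l) (hμ : 0 < μ) (z : ℝ → ℂ) (hz : Measurable z)
    (hzb : ExpBddZ l z) (Θ : ℝ → ℝ → ℝ → ℝ)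
    (hΘ : ExpBddH l (fun t ϑ ω => ((Θ t ϑ ω - ϑ - ω * t : ℝ) : ℂ))) :
    expNormH l (fun t ϑ ω => ((Fz μ z Θ t ϑ ω - ϑ - ω * t : ℝ) : ℂ)) ≤
      μ / l * expNormZ l z :=
  Fz_maps_expSpace_general l μ hl hμ z hzb Θ
end
end

section
/- Let λ>0, μ>0 and let f_∞ be a probability density on the cylinder with M := sup_{k∈ℤ,η∈ℝ} |f̂_∞(k,η)| e^{λ(|k|+|η|)} < ∞. Suppose 2μ ≤ λ and 2μM < λ. Then for every measurable z:[0,∞)→ℂ with ‖z‖_λ ≤ 2M, the asymptotic characteristic Θ for z with ‖Θ(t,ϑ,ω) − ϑ − ωt‖_λ < ∞ exists, and the function w(t) := ∫_{[0,2π)×ℝ} e^{iΘ(t,ϑ,ω)} f_∞(ϑ,ω) dϑ dω again satisfies ‖w‖_λ ≤ 2M; that is, the iteration map z ↦ w preserves the ball of radius 2M in the ‖·‖_λ norm. -/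
/-!
Write a characteristic as `Θ = ϑ + ωt + e^{-λt} D(t)`. Since `|z(s)| ≤ 2M e^{-λs}`, the
characteristic equation becomes a fixed-point equation for a bounded function `D`, whose Picard
map takes values in the ball of radius `2μM/λ < 1` and is a contraction with constant
`μM/λ < 1`. The fixed point is measurable in `(ϑ, ω)` as a pointwise limit of Picard iterates.
For the order parameter, the free flow `ϑ + ωt` contributes `f̂_∞(-1,-t)`, which is at most
`M e^{-λ(1+t)}`, and the correction at most `e^{-λt}|D| ≤ e^{-λt} ≤ M e^{-λt}`, because
`M ≥ |f̂_∞(0,0)| = 1`.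
-/

open MeasureTheory

noncomputable section

open Set Real BoundedContinuousFunction

namespace AsymptoticCharacteristic

lemma norm_exp_I_mul_sub_exp_I_mul_le (a b : ℝ) :
    ‖Complex.exp (Complex.I * a) - Complex.exp (Complex.I * b)‖ ≤ |a - b| := by
  have h : Complex.exp (Complex.I * a) - Complex.exp (Complex.I * b)
      = Complex.exp (Complex.I * b) * (Complex.exp (Complex.I * ((a - b : ℝ) : ℂ)) - 1) := by
    rw [mul_sub, ← Complex.exp_add]
    push_cast
    ring_nf
  rw [h, norm_mul, Complex.norm_exp_I_mul_ofReal, one_mul]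
  exact norm_exp_I_mul_ofReal_sub_one_le

lemma le_mul_exp_neg_mul_iff {a b c x : ℝ} : a ≤ b * exp (-c * x) ↔ a * exp (c * x) ≤ b := by
  rw [neg_mul, exp_neg, ← div_eq_mul_inv, le_div_iff₀ (exp_pos _)]

section ExpDecayIntegral

variable {g : ℝ → ℝ} {a c A : ℝ}

lemma integrableOn_Ioi_of_abs_le_exp (hc : 0 < c)
    (hg : AEStronglyMeasurable g (volume.restrict (Ioi a)))
    (hbound : ∀ s, a < s → |g s| ≤ A * exp (-c * s)) : IntegrableOn g (Ioi a) :=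
  ((exp_neg_integrableOn_Ioi a hc).const_mul A).mono' hg
    (ae_restrict_of_forall_mem measurableSet_Ioi hbound)

lemma abs_setIntegral_Ioi_le_of_abs_le_exp (hc : 0 < c)
    (hbound : ∀ s, a < s → |g s| ≤ A * exp (-c * s)) :
    |∫ s in Ioi a, g s| ≤ A * exp (-c * a) / c := by
  have h := norm_integral_le_of_norm_le (f := g) ((exp_neg_integrableOn_Ioi a hc).const_mul A)
    (ae_restrict_of_forall_mem measurableSet_Ioi hbound)
  rwa [integral_const_mul, integral_exp_mul_Ioi (neg_neg_of_pos hc), neg_div_neg_eq,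
    ← mul_div_assoc] at h

end ExpDecayIntegral

structure ExpDecay (l C : ℝ) (z : ℝ → ℂ) : Prop where
  measurable : Measurable z
  norm_le : ∀ s, 0 ≤ s → ‖z s‖ ≤ C * exp (-l * s)

lemma ExpDecay.nonneg {l C : ℝ} {z : ℝ → ℂ} (hz : ExpDecay l C z) : 0 ≤ C := by
  simpa using (norm_nonneg _).trans (hz.norm_le 0 le_rfl)

def charKernel (z : ℝ → ℂ) (s θ : ℝ) : ℝ :=
  (Complex.exp (Complex.I * θ) * starRingEnd ℂ (z s)).im

section CharKernel

variable {z : ℝ → ℂ} {s : ℝ}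

lemma abs_charKernel_le (θ : ℝ) : |charKernel z s θ| ≤ ‖z s‖ := by
  refine (Complex.abs_im_le_norm _).trans ?_
  rw [norm_mul, Complex.norm_exp_I_mul_ofReal, one_mul, Complex.norm_conj]

lemma abs_charKernel_sub_le (θ₁ θ₂ : ℝ) :
    |charKernel z s θ₁ - charKernel z s θ₂| ≤ |θ₁ - θ₂| * ‖z s‖ := by
  rw [charKernel, charKernel, ← Complex.sub_im, ← sub_mul]
  refine (Complex.abs_im_le_norm _).trans ?_
  rw [norm_mul, Complex.norm_conj]
  gcongr
  exact norm_exp_I_mul_sub_exp_I_mul_le θ₁ θ₂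

lemma measurable_charKernel {α : Type*} [MeasurableSpace α] {S θ : α → ℝ} (hz : Measurable z)
    (hS : Measurable S) (hθ : Measurable θ) : Measurable fun x => charKernel z (S x) (θ x) := by
  unfold charKernel
  fun_prop

end CharKernel

/-- The ansatz for the characteristic through `p = (ϑ, ω)`. -/
def phase (l : ℝ) (p : ℝ × ℝ) (D : ℝ → ℝ) (s : ℝ) : ℝ :=
  p.1 + p.2 * s + exp (-l * s) * D s

/-- The Picard map of the characteristic equation for `D`. It is constant on `t ≤ 0`, so that
bounded continuous functions on `ℝ` can serve as its domain. -/
def picard (l μ : ℝ) (z : ℝ → ℂ) (p : ℝ × ℝ) (D : ℝ → ℝ) (t : ℝ) : ℝ :=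
  exp (l * max t 0) * (μ * ∫ s in Ioi (max t 0), charKernel z s (phase l p D s))

section Picard

variable {l μ C : ℝ} {z : ℝ → ℂ} {p : ℝ × ℝ}

lemma integrableOn_charKernel_phase (hl : 0 < l) (hz : ExpDecay l C z) {D : ℝ → ℝ}
    (hD : Measurable D) {a : ℝ} (ha : 0 ≤ a) :
    IntegrableOn (fun s => charKernel z s (phase l p D s)) (Ioi a) :=
  have hphase : Measurable (phase l p D) := by unfold phase; fun_prop
  integrableOn_Ioi_of_abs_le_exp hl
    (measurable_charKernel hz.measurable measurable_id hphase).aestronglyMeasurable fun s hs =>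
      (abs_charKernel_le _).trans (hz.norm_le s (ha.trans hs.le))

lemma continuous_picard (hl : 0 < l) (hz : ExpDecay l C z) {D : ℝ → ℝ} (hD : Measurable D) :
    Continuous (picard l μ z p D) := by
  have htail :=
    (integrableOn_charKernel_phase (p := p) hl hz hD le_rfl).continuousOn_Ici_primitive_Ioi
  have hmax : Continuous fun t : ℝ => max t 0 := continuous_id.max continuous_const
  exact (continuous_const.mul hmax).rexp.mul
    (continuous_const.mul (htail.comp_continuous hmax fun t => le_max_right t 0))

lemma abs_picard_le (hl : 0 < l) (hμ : 0 ≤ μ) (hz : ExpDecay l C z) (D : ℝ → ℝ) (t : ℝ) :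
    |picard l μ z p D t| ≤ μ * C / l := by
  set a := max t 0
  have hint : |∫ s in Ioi a, charKernel z s (phase l p D s)| ≤ C * exp (-l * a) / l :=
    abs_setIntegral_Ioi_le_of_abs_le_exp hl fun s hs =>
      (abs_charKernel_le _).trans (hz.norm_le s ((le_max_right t 0).trans hs.le))
  rw [picard, abs_mul, abs_mul, abs_of_pos (exp_pos _), abs_of_nonneg hμ]
  calc exp (l * a) * (μ * |∫ s in Ioi a, charKernel z s (phase l p D s)|)
      ≤ exp (l * a) * (μ * (C * exp (-l * a) / l)) := by gcongr
    _ = μ * C / l * (exp (l * a) * exp (-l * a)) := by ring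
    _ = μ * C / l := by rw [← exp_add, neg_mul, add_neg_cancel, exp_zero, mul_one]

lemma abs_charKernel_phase_sub_le (hz : ExpDecay l C z) {D₁ D₂ : ℝ → ℝ} {d s : ℝ}
    (hd : ∀ s, |D₁ s - D₂ s| ≤ d) (hs : 0 ≤ s) :
    |charKernel z s (phase l p D₁ s) - charKernel z s (phase l p D₂ s)|
      ≤ C * d * exp (-(2 * l) * s) := by
  have hd0 : 0 ≤ d := (abs_nonneg _).trans (hd 0)
  calc |charKernel z s (phase l p D₁ s) - charKernel z s (phase l p D₂ s)|
      ≤ |phase l p D₁ s - phase l p D₂ s| * ‖z s‖ := abs_charKernel_sub_le _ _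
    _ = exp (-l * s) * |D₁ s - D₂ s| * ‖z s‖ := by
        rw [phase, phase, add_sub_add_left_eq_sub, ← mul_sub, abs_mul, abs_of_pos (exp_pos _)]
    _ ≤ exp (-l * s) * d * (C * exp (-l * s)) := by
        gcongr
        exacts [hd s, hz.norm_le s hs]
    _ = C * d * exp (-(2 * l) * s) := by
        rw [show -(2 * l) * s = -l * s + -l * s by ring, exp_add]
        ring

/-- A change of `D` moves the phase by `e^{-λs}` times as much, and `z` contributes another
factor `e^{-λs}`: this gains the `2` in the contraction constant. -/
lemma abs_picard_sub_picard_le (hl : 0 < l) (hμ : 0 ≤ μ) (hz : ExpDecay l C z)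
    {D₁ D₂ : ℝ → ℝ} (hD₁ : Measurable D₁) (hD₂ : Measurable D₂) {d : ℝ}
    (hd : ∀ s, |D₁ s - D₂ s| ≤ d) (t : ℝ) :
    |picard l μ z p D₁ t - picard l μ z p D₂ t| ≤ μ * C / (2 * l) * d := by
  set a := max t 0
  have ha : 0 ≤ a := le_max_right t 0
  have hint : |∫ s in Ioi a, (charKernel z s (phase l p D₁ s) - charKernel z s (phase l p D₂ s))|
      ≤ C * d * exp (-(2 * l) * a) / (2 * l) :=
    abs_setIntegral_Ioi_le_of_abs_le_exp (by positivity) fun s hs =>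
      abs_charKernel_phase_sub_le hz hd (ha.trans hs.le)
  have hdecay : exp (l * a) * exp (-(2 * l) * a) ≤ 1 := by
    rw [← exp_add, exp_le_one_iff]
    nlinarith
  have hCd : 0 ≤ μ * C / (2 * l) * d := by
    have := hz.nonneg
    have := (abs_nonneg _).trans (hd 0)
    positivity
  rw [picard, picard, ← mul_sub, ← mul_sub, ← integral_sub
    (integrableOn_charKernel_phase hl hz hD₁ ha) (integrableOn_charKernel_phase hl hz hD₂ ha),
    abs_mul, abs_mul, abs_of_pos (exp_pos _), abs_of_nonneg hμ]
  calc _ ≤ exp (l * a) * (μ * (C * d * exp (-(2 * l) * a) / (2 * l))) := by gcongr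
    _ = μ * C / (2 * l) * d * (exp (l * a) * exp (-(2 * l) * a)) := by ring
    _ ≤ μ * C / (2 * l) * d := mul_le_of_le_one_right hCd hdecay

lemma measurable_picard_uncurry (hz : Measurable z) {G : ℝ × ℝ → ℝ → ℝ}
    (hG : Measurable (Function.uncurry G)) :
    Measurable fun x : (ℝ × ℝ) × ℝ => picard l μ z x.1 (G x.1) x.2 := by
  have hphase : Measurable fun y : ((ℝ × ℝ) × ℝ) × ℝ => phase l y.1.1 (G y.1.1) y.2 := by
    have hGy : Measurable fun y : ((ℝ × ℝ) × ℝ) × ℝ => G y.1.1 y.2 :=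
      hG.comp (measurable_fst.fst.prodMk measurable_snd)
    unfold phase
    fun_prop
  have htail : Measurable fun y : ((ℝ × ℝ) × ℝ) × ℝ =>
      (Ioi (max y.1.2 0)).indicator (fun s => charKernel z s (phase l y.1.1 (G y.1.1) s)) y.2 := by
    simp only [Set.indicator_apply, mem_Ioi]
    exact Measurable.ite (measurableSet_lt (by fun_prop) measurable_snd)
      (measurable_charKernel hz measurable_snd hphase) measurable_const
  simp_rw [picard, ← integral_indicator measurableSet_Ioi]
  exact (by fun_prop : Measurable fun x : (ℝ × ℝ) × ℝ => exp (l * max x.2 0)).mul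
    (htail.stronglyMeasurable.integral_prod_right'.measurable.const_mul μ)

def picardBCF (hl : 0 < l) (hμ : 0 ≤ μ) (hz : ExpDecay l C z) (p : ℝ × ℝ) (D : ℝ →ᵇ ℝ) :
    ℝ →ᵇ ℝ :=
  .ofNormedAddCommGroup (picard l μ z p D) (continuous_picard hl hz D.continuous.measurable)
    (μ * C / l) (abs_picard_le hl hμ hz D)

lemma picardBCF_apply (hl : 0 < l) (hμ : 0 ≤ μ) (hz : ExpDecay l C z) (D : ℝ →ᵇ ℝ) (t : ℝ) :
    picardBCF hl hμ hz p D t = picard l μ z p D t :=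
  rfl

lemma contractingWith_picardBCF (hl : 0 < l) (hμ : 0 ≤ μ) (hz : ExpDecay l C z)
    (hμC : μ * C < 2 * l) (p : ℝ × ℝ) :
    ContractingWith (μ * C / (2 * l)).toNNReal (picardBCF hl hμ hz p) := by
  have hK : 0 ≤ μ * C / (2 * l) := div_nonneg (mul_nonneg hμ hz.nonneg) (by linarith)
  refine ⟨by simpa using (div_lt_one (by linarith)).2 hμC,
    LipschitzWith.of_dist_le_mul fun D₁ D₂ => ?_⟩
  rw [Real.coe_toNNReal _ hK]
  refine (dist_le (mul_nonneg hK dist_nonneg)).2 fun t => ?_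
  rw [Real.dist_eq, picardBCF_apply, picardBCF_apply]
  refine abs_picard_sub_picard_le hl hμ hz D₁.continuous.measurable D₂.continuous.measurable
    (fun s => ?_) t
  simpa only [Real.dist_eq] using dist_coe_le_dist (f := D₁) (g := D₂) s

lemma exists_picard_fixed (hl : 0 < l) (hμ : 0 ≤ μ) (hz : ExpDecay l C z)
    (hμC : μ * C < 2 * l) :
    ∃ D : ℝ × ℝ → ℝ →ᵇ ℝ, (∀ p t, D p t = picard l μ z p (D p) t) ∧
      ∀ t, Measurable fun p => D p t := by
  have hK := contractingWith_picardBCF hl hμ hz hμC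
  refine ⟨fun p => (hK p).fixedPoint, fun p t => ?_, fun t => ?_⟩
  · exact (DFunLike.congr_fun (hK p).fixedPoint_isFixedPt t).symm
  have hiter (n : ℕ) :
      Measurable fun x : (ℝ × ℝ) × ℝ => (picardBCF hl hμ hz x.1)^[n] 0 x.2 := by
    induction n with
    | zero => exact measurable_const
    | succ n ih =>
      simp_rw [Function.iterate_succ_apply', picardBCF_apply]
      exact measurable_picard_uncurry (G := fun p => (picardBCF hl hμ hz p)^[n] 0) hz.measurable ih
  have hslice : Measurable fun p : ℝ × ℝ => (p, t) := measurable_id.prodMk measurable_const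
  refine measurable_of_tendsto_metrizable (fun n => (hiter n).comp hslice)
    (tendsto_pi_nhds.2 fun p => ?_)
  exact ((continuous_eval_const t).tendsto _).comp ((hK p).tendsto_iterate_fixedPoint 0)

lemma isAsymChar_phase_of_picard {D : ℝ × ℝ → ℝ → ℝ}
    (hD : ∀ p t, 0 ≤ t → D p t = picard l μ z p (D p) t) :
    IsAsymChar μ z fun t ϑ ω => phase l (ϑ, ω) (D (ϑ, ω)) t := by
  intro t ht ϑ ω
  dsimp only [phase]
  rw [hD _ t ht, picard, max_eq_left ht, ← mul_assoc, ← exp_add, neg_mul, neg_add_cancel,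
    exp_zero, one_mul]
  rfl

theorem exists_isAsymChar (hl : 0 < l) (hμ : 0 ≤ μ) (hz : ExpDecay l C z)
    (hμC : μ * C < 2 * l) :
    ∃ Θ : ℝ → ℝ → ℝ → ℝ,
      (∀ t ϑ ω, 0 ≤ t → |Θ t ϑ ω - ϑ - ω * t| ≤ μ * C / l * exp (-l * t)) ∧
      IsAsymChar μ z Θ ∧ ∀ t, Measurable fun p : ℝ × ℝ => Θ t p.1 p.2 := by
  obtain ⟨D, hfix, hmeas⟩ := exists_picard_fixed hl hμ hz hμC
  refine ⟨fun t ϑ ω => phase l (ϑ, ω) (D (ϑ, ω)) t, fun t ϑ ω _ => ?_,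
    isAsymChar_phase_of_picard fun p t _ => hfix p t, fun t => ?_⟩
  · dsimp only [phase]
    rw [show ϑ + ω * t + exp (-l * t) * D (ϑ, ω) t - ϑ - ω * t = exp (-l * t) * D (ϑ, ω) t by ring,
      abs_mul, abs_of_pos (exp_pos _), mul_comm, hfix]
    gcongr
    exact abs_picard_le hl hμ hz _ t
  · unfold phase
    exact (by fun_prop : Measurable fun p : ℝ × ℝ => p.1 + p.2 * t).add
      ((hmeas t).const_mul _)

end Picard

section OrderParameter

variable {f : ℝ → ℝ → ℝ}

lemma fHat_zero_zero (hf : IsCylDensity f) : fHat f 0 0 = 1 := by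
  simp only [fHat, Int.cast_zero, zero_mul, add_zero, Complex.ofReal_zero, mul_zero,
    Complex.exp_zero, mul_one]
  rw [integral_complex_ofReal, hf.integral_one, Complex.ofReal_one]

lemma fHat_neg_one_neg (t : ℝ) :
    fHat f (-1) (-t) = ∫ p : ℝ × ℝ,
      Complex.exp (Complex.I * ((p.1 + p.2 * t : ℝ) : ℂ)) * (f p.1 p.2 : ℂ) ∂cylMeasure := by
  refine integral_congr_ae (Filter.Eventually.of_forall fun p => ?_)
  dsimp only
  rw [mul_comm]
  congr 2
  push_cast
  ring

lemma integrable_exp_I_mul_mul (hf : IsCylDensity f) {φ : ℝ × ℝ → ℝ} (hφ : Measurable φ) :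
    Integrable (fun p : ℝ × ℝ => Complex.exp (Complex.I * φ p) * (f p.1 p.2 : ℂ)) cylMeasure := by
  refine hf.integrable.mono' ?_ (Filter.Eventually.of_forall fun p => ?_)
  · exact (by fun_prop : Measurable fun p => Complex.exp (Complex.I * φ p)).aestronglyMeasurable.mul
      (Complex.continuous_ofReal.comp_aestronglyMeasurable hf.integrable.aestronglyMeasurable)
  · rw [norm_mul, Complex.norm_exp_I_mul_ofReal, one_mul, Complex.norm_real,
      Real.norm_of_nonneg (hf.nonneg _ _)]

lemma norm_orderParam_sub_fHat_le (hf : IsCylDensity f) {Θ : ℝ → ℝ → ℝ → ℝ} {t δ : ℝ}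
    (hΘ : Measurable fun p : ℝ × ℝ => Θ t p.1 p.2)
    (hδ : ∀ ϑ ω, |Θ t ϑ ω - ϑ - ω * t| ≤ δ) :
    ‖orderParam f Θ t - fHat f (-1) (-t)‖ ≤ δ := by
  rw [orderParam, fHat_neg_one_neg, ← integral_sub (integrable_exp_I_mul_mul hf hΘ)
    (integrable_exp_I_mul_mul hf (by fun_prop))]
  refine (norm_integral_le_of_norm_le (hf.integrable.const_mul δ)
    (Filter.Eventually.of_forall fun p => ?_)).trans_eq ?_
  · rw [← sub_mul, norm_mul, Complex.norm_real, Real.norm_eq_abs, abs_of_nonneg (hf.nonneg _ _)]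
    gcongr
    · exact hf.nonneg _ _
    · exact (norm_exp_I_mul_sub_exp_I_mul_le _ _).trans (by rw [← sub_sub]; exact hδ _ _)
  · rw [integral_const_mul, hf.integral_one, mul_one]

end OrderParameter

section WeightedNorm

variable {l C : ℝ} {z : ℝ → ℂ}

lemma norm_le_of_expNormZ_le (hz : ExpBddZ l z) (h : expNormZ l z ≤ C) {t : ℝ} (ht : 0 ≤ t) :
    ‖z t‖ ≤ C * exp (-l * t) :=
  le_mul_exp_neg_mul_iff.2 ((le_ciSup hz ⟨t, ht⟩).trans h)

lemma expNormZ_le_of_forall (h : ∀ t, 0 ≤ t → ‖z t‖ ≤ C * exp (-l * t)) : expNormZ l z ≤ C :=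
  ciSup_le fun t => le_mul_exp_neg_mul_iff.1 (h t.1 t.2)

end WeightedNorm

end AsymptoticCharacteristic

open AsymptoticCharacteristic

theorem iteration_preserves_ball_exp_general
    (l μ : ℝ) (hl : 0 < l) (hμ : 0 < μ)
    (f : ℝ → ℝ → ℝ) (hf : IsCylDensity f)
    (M : ℝ) (hM : ∀ (k : ℤ) (η : ℝ),
      ‖fHat f k η‖ * Real.exp (l * (|(k : ℝ)| + |η|)) ≤ M)
    (hμM : 2 * μ * M < l) :
    ∀ z : ℝ → ℂ, Measurable z → ExpBddZ l z → expNormZ l z ≤ 2 * M →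
      ∃ Θ : ℝ → ℝ → ℝ → ℝ,
        ExpBddH l (fun t ϑ ω => ((Θ t ϑ ω - ϑ - ω * t : ℝ) : ℂ)) ∧
        IsAsymChar μ z Θ ∧
        expNormZ l (orderParam f Θ) ≤ 2 * M := by
  intro z hzm hzbdd hznorm
  have hM1 : 1 ≤ M := by simpa [fHat_zero_zero hf] using hM 0 0
  have hz : ExpDecay l (2 * M) z := ⟨hzm, fun s hs => norm_le_of_expNormZ_le hzbdd hznorm hs⟩
  obtain ⟨Θ, hΘ, hchar, hmeas⟩ := exists_isAsymChar hl hμ.le hz (by linarith)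
  have hδ : μ * (2 * M) / l ≤ 1 := (div_le_one hl).2 (by linarith)
  refine ⟨Θ, ⟨μ * (2 * M) / l, ?_⟩, hchar, expNormZ_le_of_forall fun t ht => ?_⟩
  · rintro _ ⟨⟨⟨t, ht⟩, ϑ, ω⟩, rfl⟩
    simpa only [Complex.norm_real, Real.norm_eq_abs] using
      le_mul_exp_neg_mul_iff.1 (hΘ t ϑ ω ht)
  have hfree : ‖fHat f (-1) (-t)‖ ≤ M * exp (-l * (1 + t)) :=
    le_mul_exp_neg_mul_iff.2 (by simpa [abs_of_nonneg ht] using hM (-1) (-t))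
  have hcorr : ‖orderParam f Θ t - fHat f (-1) (-t)‖ ≤ exp (-l * t) :=
    norm_orderParam_sub_fHat_le hf (hmeas t) fun ϑ ω =>
      (hΘ t ϑ ω ht).trans (mul_le_of_le_one_left (exp_pos _).le hδ)
  calc ‖orderParam f Θ t‖
      ≤ ‖fHat f (-1) (-t)‖ + ‖orderParam f Θ t - fHat f (-1) (-t)‖ := norm_le_insert' _ _
    _ ≤ M * exp (-l * t) + M * exp (-l * t) := by
        gcongr
        · exact hfree.trans (mul_le_mul_of_nonneg_left (exp_le_exp.2 (by nlinarith)) (by linarith))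
        · exact hcorr.trans (le_mul_of_one_le_left (exp_pos _).le hM1)
    _ = 2 * M * exp (-l * t) := by ring

/-- The iteration map `z ↦ w` preserves the ball of radius `2M` in the `‖·‖_λ` norm. -/
theorem iteration_preserves_ball_exp
    (l μ : ℝ) (hl : 0 < l) (hμ : 0 < μ)
    (f : ℝ → ℝ → ℝ) (hf : IsCylDensity f)
    (M : ℝ) (hM : ∀ (k : ℤ) (η : ℝ),
      ‖fHat f k η‖ * Real.exp (l * (|(k : ℝ)| + |η|)) ≤ M)
    (hμl : 2 * μ ≤ l) (hμM : 2 * μ * M < l) :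
    ∀ z : ℝ → ℂ, Measurable z → ExpBddZ l z → expNormZ l z ≤ 2 * M →
      ∃ Θ : ℝ → ℝ → ℝ → ℝ,
        ExpBddH l (fun t ϑ ω => ((Θ t ϑ ω - ϑ - ω * t : ℝ) : ℂ)) ∧
        IsAsymChar μ z Θ ∧
        expNormZ l (orderParam f Θ) ≤ 2 * M :=
  iteration_preserves_ball_exp_general l μ hl hμ f hf M hM hμM
end
end

section
/- Let γ≥2 and let z:[0,∞)→ℂ be measurable with ‖z‖_{(γ)} < ∞. There exists a constant C>0 depending only on γ such that if μ>0 satisfies Cμ‖z‖_{(γ)} < 1, then there is a unique map Θ:[0,∞)×ℝ×ℝ→ℝ with ‖Θ(t,ϑ,ω) − ϑ − ωt‖_{(γ−1)} < ∞ which is an asymptotic characteristic for z, and it satisfies ‖Θ(t,ϑ,ω) − ϑ − ωt‖_{(γ−1)} ≤ Cμ‖z‖_{(γ)}. -/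
open MeasureTheory

noncomputable section

/-- The Japanese bracket `⟨t⟩ = (1+t²)^{1/2}`. -/
def jap (t : ℝ) : ℝ := Real.sqrt (1 + t ^ 2)

/-- Weighted sup-norm `sup_{t ≥ 0} |z t| ⟨t⟩^γ` for `z : ℝ → ℂ`. -/
def polyNormZ (γ : ℝ) (z : ℝ → ℂ) : ℝ :=
  ⨆ t : {t : ℝ // 0 ≤ t}, ‖z t.1‖ * jap t.1 ^ γ

/-- Finiteness of the weighted sup-norm for `z : ℝ → ℂ`. -/
def PolyBddZ (γ : ℝ) (z : ℝ → ℂ) : Prop :=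
  BddAbove (Set.range fun t : {t : ℝ // 0 ≤ t} => ‖z t.1‖ * jap t.1 ^ γ)

/-- Weighted sup-norm `sup_{t ≥ 0, ϑ, ω} |h t ϑ ω| ⟨t⟩^γ`. -/
def polyNormH (γ : ℝ) (h : ℝ → ℝ → ℝ → ℂ) : ℝ :=
  ⨆ p : {t : ℝ // 0 ≤ t} × ℝ × ℝ, ‖h p.1.1 p.2.1 p.2.2‖ * jap p.1.1 ^ γ

/-- Finiteness of the weighted sup-norm for `h`. -/
def PolyBddH (γ : ℝ) (h : ℝ → ℝ → ℝ → ℂ) : Prop :=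
  BddAbove (Set.range fun p : {t : ℝ // 0 ≤ t} × ℝ × ℝ =>
    ‖h p.1.1 p.2.1 p.2.2‖ * jap p.1.1 ^ γ)

/-!
Writing `Θ = ϑ + ωt + φ`, the defining identity becomes the phase equation
`φ t = μ ∫_t^∞ Im (e^{i(ϑ + ωs + φ s)} conj z(s)) ds`. Its forcing is bounded by
`|z s| ≤ ‖z‖_{(γ)} ⟨s⟩^{-γ}` and is `|z s|`-Lipschitz in `φ`, so the right-hand side is a
contraction for the sup norm, with constant `μ ∫_0^∞ |z| ≤ Cμ‖z‖_{(γ)} < 1`. Banach's fixed point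
theorem gives a solution; it is unique because every solution is bounded by the equation itself,
and `∫_t^∞ ⟨s⟩^{-γ} ds ≤ C ⟨t⟩^{1-γ}` gives the weighted bound.
-/

open Set Filter
open scoped BoundedContinuousFunction

section JapaneseBracket

lemma jap_pos (t : ℝ) : 0 < jap t := Real.sqrt_pos.2 (by positivity)

lemma jap_zero : jap 0 = 1 := by simp [jap]

lemma jap_le_one_add {t : ℝ} (ht : 0 ≤ t) : jap t ≤ 1 + t :=
  Real.sqrt_le_iff.2 ⟨by linarith, by nlinarith⟩

lemma one_add_le_sqrt_two_mul_jap (t : ℝ) : 1 + t ≤ √2 * jap t := by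
  rw [jap, ← Real.sqrt_mul zero_le_two]
  exact Real.le_sqrt_of_sq_le (by nlinarith [sq_nonneg (1 - t)])

lemma integrable_jap_rpow_neg {γ : ℝ} (hγ : 1 < γ) : Integrable fun s ↦ jap s ^ (-γ) := by
  refine (integrable_rpow_neg_one_add_norm_sq (E := ℝ) (μ := volume) (r := γ)
    (by simpa using hγ)).congr (ae_of_all _ fun s ↦ ?_)
  show (1 + ‖s‖ ^ 2) ^ (-γ / 2) = jap s ^ (-γ)
  rw [jap, Real.sqrt_eq_rpow, ← Real.rpow_mul (by positivity), Real.norm_eq_abs, sq_abs]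
  ring_nf

lemma jap_rpow_neg_le {γ s : ℝ} (hγ : 0 ≤ γ) (hs : -1 < s) :
    jap s ^ (-γ) ≤ √2 ^ γ * (1 + s) ^ (-γ) := by
  have h2 : (0 : ℝ) < √2 := by positivity
  calc jap s ^ (-γ) ≤ ((1 + s) / √2) ^ (-γ) :=
        Real.rpow_le_rpow_of_nonpos (div_pos (by linarith) h2)
          ((div_le_iff₀ h2).2 (by linarith [one_add_le_sqrt_two_mul_jap s])) (by linarith)
    _ = √2 ^ γ * (1 + s) ^ (-γ) := by
        rw [Real.div_rpow (by linarith) h2.le, Real.rpow_neg h2.le, div_eq_mul_inv, inv_inv,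
          mul_comm]

lemma integrableOn_Ioi_one_add_rpow_neg {γ t : ℝ} (hγ : 1 < γ) (ht : -1 < t) :
    IntegrableOn (fun s ↦ (1 + s) ^ (-γ)) (Ioi t) := by
  have h := (measurePreserving_add_left volume (1 : ℝ)).integrableOn_comp_preimage
    (MeasurableEquiv.addLeft (1 : ℝ)).measurableEmbedding (f := fun u ↦ u ^ (-γ)) (s := Ioi (1 + t))
  rw [preimage_const_add_Ioi, add_sub_cancel_left] at h
  exact h.2 (integrableOn_Ioi_rpow_of_lt (by linarith) (by linarith))

lemma integral_Ioi_one_add_rpow_neg {γ t : ℝ} (hγ : 1 < γ) (ht : -1 < t) :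
    ∫ s in Ioi t, (1 + s) ^ (-γ) = (1 + t) ^ (1 - γ) / (γ - 1) := by
  have h := (measurePreserving_add_left volume (1 : ℝ)).setIntegral_preimage_emb
    (MeasurableEquiv.addLeft (1 : ℝ)).measurableEmbedding (fun u ↦ u ^ (-γ)) (Ioi (1 + t))
  rw [preimage_const_add_Ioi, add_sub_cancel_left] at h
  rw [h, integral_Ioi_rpow_of_lt (by linarith) (by linarith), show -γ + 1 = 1 - γ by ring,
    neg_div, ← div_neg, neg_sub]

lemma setIntegral_Ioi_jap_rpow_neg_le {γ t : ℝ} (hγ : 2 ≤ γ) (ht : 0 ≤ t) :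
    ∫ s in Ioi t, jap s ^ (-γ) ≤ √2 ^ γ * jap t ^ (1 - γ) := by
  have hpow : (1 + t) ^ (1 - γ) ≤ jap t ^ (1 - γ) :=
    Real.rpow_le_rpow_of_nonpos (jap_pos t) (jap_le_one_add ht) (by linarith)
  calc ∫ s in Ioi t, jap s ^ (-γ) ≤ ∫ s in Ioi t, √2 ^ γ * (1 + s) ^ (-γ) :=
        setIntegral_mono_on (integrable_jap_rpow_neg (by linarith)).integrableOn
          ((integrableOn_Ioi_one_add_rpow_neg (by linarith) (by linarith)).const_mul _)
          measurableSet_Ioi fun s hs ↦ jap_rpow_neg_le (by linarith) (by linarith [mem_Ioi.1 hs])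
    _ = √2 ^ γ * ((1 + t) ^ (1 - γ) / (γ - 1)) := by
        rw [integral_const_mul, integral_Ioi_one_add_rpow_neg (by linarith) (by linarith)]
    _ ≤ √2 ^ γ * jap t ^ (1 - γ) := by
        gcongr
        -- `γ - 1 ≥ 1` is where `γ ≥ 2` enters
        exact (div_le_self (by positivity) (by linarith)).trans hpow

end JapaneseBracket

lemma MeasureTheory.Integrable.continuous_setIntegral_Ioi {E : Type*} [NormedAddCommGroup E]
    [NormedSpace ℝ E] {f : ℝ → E} (hf : Integrable f) : Continuous fun t ↦ ∫ s in Ioi t, f s :=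
  continuous_iff_continuousAt.2 fun t ↦
    (hf.integrableOn.continuousOn_Ici_primitive_Ioi (a₀ := t - 1)).continuousAt
      (Ici_mem_nhds (by linarith))

lemma integrableOn_Ioi_of_forall_gt {E : Type*} [NormedAddCommGroup E] {f : ℝ → E} {g : ℝ → ℝ}
    {a : ℝ} (hg : IntegrableOn g (Ioi a)) (hfg : ∀ s ∈ Ioi a, ‖f s‖ ≤ g s)
    (hf : ∀ b, a < b → IntegrableOn f (Ioi b)) : IntegrableOn f (Ioi a) := by
  have hcov : AECover (volume.restrict (Ioi a)) atTop fun n : ℕ ↦ Ioi (a + 1 / (n + 1)) :=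
    aecover_Ioi_of_Ioi (by
      simpa using (tendsto_const_nhds (x := a)).add
        (tendsto_one_div_add_atTop_nhds_zero_nat (𝕜 := ℝ)))
  refine hg.mono' (hcov.aestronglyMeasurable fun n ↦ ?_)
    ((ae_restrict_iff' measurableSet_Ioi).2 (ae_of_all _ hfg))
  rw [Measure.restrict_restrict measurableSet_Ioi]
  exact (hf _ (lt_add_of_pos_right a Nat.one_div_pos_of_nat)).aestronglyMeasurable.mono_set
    inter_subset_left

section PhaseEquation

def phaseForcing (ζ : ℝ → ℂ) (θ : ℝ → ℝ) (s : ℝ) : ℝ :=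
  (Complex.exp (Complex.I * (θ s : ℂ)) * starRingEnd ℂ (ζ s)).im

def IsPhaseCorrection (μ : ℝ) (ζ : ℝ → ℂ) (θ₀ φ : ℝ → ℝ) : Prop :=
  ∀ t, 0 ≤ t → φ t = μ * ∫ s in Ioi t, phaseForcing ζ (θ₀ + φ) s

variable {ζ : ℝ → ℂ} {D θ θ₁ θ₂ : ℝ → ℝ} {M t : ℝ}

lemma abs_phaseForcing_le (s : ℝ) : |phaseForcing ζ θ s| ≤ ‖ζ s‖ := by
  refine (Complex.abs_im_le_norm _).trans_eq ?_
  rw [norm_mul, Complex.norm_exp_I_mul_ofReal, Complex.norm_conj, one_mul]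

open Complex in
lemma abs_phaseForcing_sub_le (s : ℝ) :
    |phaseForcing ζ θ₁ s - phaseForcing ζ θ₂ s| ≤ |θ₁ s - θ₂ s| * ‖ζ s‖ := by
  have hexp : ‖exp (I * θ₁ s) - exp (I * θ₂ s)‖ ≤ |θ₁ s - θ₂ s| := by
    have h : exp (I * θ₁ s) - exp (I * θ₂ s) = exp (I * θ₂ s) * (exp (I * ↑(θ₁ s - θ₂ s)) - 1) := by
      rw [mul_sub, ← exp_add]
      push_cast
      ring_nf
    rw [h, norm_mul, norm_exp_I_mul_ofReal, one_mul, ← Real.norm_eq_abs]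
    exact Real.norm_exp_I_mul_ofReal_sub_one_le
  unfold phaseForcing
  rw [← sub_im, ← sub_mul]
  refine (abs_im_le_norm _).trans ?_
  rw [norm_mul, norm_conj]
  exact mul_le_mul_of_nonneg_right hexp (norm_nonneg _)

lemma measurable_phaseForcing (hζ : Measurable ζ) (hθ : Measurable θ) :
    Measurable (phaseForcing ζ θ) := by
  unfold phaseForcing
  fun_prop

section Dominated

variable (hD : Integrable D) (hζD : ∀ s, ‖ζ s‖ ≤ D s)
include hD hζD

lemma integrable_phaseForcing (hζ : Measurable ζ) (hθ : Measurable θ) :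
    Integrable (phaseForcing ζ θ) :=
  hD.mono' (measurable_phaseForcing hζ hθ).aestronglyMeasurable
    (ae_of_all _ fun s ↦ (abs_phaseForcing_le s).trans (hζD s))

lemma abs_setIntegral_phaseForcing_le (t : ℝ) :
    |∫ s in Ioi t, phaseForcing ζ θ s| ≤ ∫ s in Ioi t, D s := by
  rw [← Real.norm_eq_abs]
  exact norm_integral_le_of_norm_le hD.integrableOn
    (ae_of_all _ fun s ↦ (abs_phaseForcing_le s).trans (hζD s))

lemma abs_setIntegral_phaseForcing_sub_le (h₁ : IntegrableOn (phaseForcing ζ θ₁) (Ioi t))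
    (h₂ : IntegrableOn (phaseForcing ζ θ₂) (Ioi t)) (hM : ∀ s, t < s → |θ₁ s - θ₂ s| ≤ M) :
    |(∫ s in Ioi t, phaseForcing ζ θ₁ s) - ∫ s in Ioi t, phaseForcing ζ θ₂ s| ≤
      M * ∫ s in Ioi t, D s := by
  rw [← integral_sub h₁ h₂, ← integral_const_mul, ← Real.norm_eq_abs]
  refine norm_integral_le_of_norm_le (hD.integrableOn.const_mul M)
    ((ae_restrict_iff' measurableSet_Ioi).2 (ae_of_all _ fun s hs ↦ ?_))
  exact (abs_phaseForcing_sub_le s).trans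
    (mul_le_mul (hM s hs) (hζD s) (norm_nonneg _) ((abs_nonneg _).trans (hM s hs)))

end Dominated

end PhaseEquation

section PhaseCorrection

variable {ζ : ℝ → ℂ} {D θ₀ φ ψ : ℝ → ℝ} {μ t : ℝ}
variable (hD : Integrable D) (hζD : ∀ s, ‖ζ s‖ ≤ D s)
include hD hζD

namespace IsPhaseCorrection

lemma abs_le (h : IsPhaseCorrection μ ζ θ₀ φ) (ht : 0 ≤ t) :
    |φ t| ≤ |μ| * ∫ s in Ioi t, D s := by
  rw [h t ht, abs_mul]
  exact mul_le_mul_of_nonneg_left (abs_setIntegral_phaseForcing_le hD hζD t) (abs_nonneg μ)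

/-- A solution of the phase equation need not be measurable, yet its forcing term is integrable:
where the tail integral diverges, its junk value `0` makes `φ` vanish. -/
lemma integrableOn_phaseForcing (h : IsPhaseCorrection μ ζ θ₀ φ) (hζ : Measurable ζ)
    (hθ₀ : Measurable θ₀) (ht : 0 ≤ t) : IntegrableOn (phaseForcing ζ (θ₀ + φ)) (Ioi t) := by
  set f := phaseForcing ζ (θ₀ + φ)
  set A := {u | 0 ≤ u ∧ ¬IntegrableOn f (Ioi u)}
  have hfA : ∀ s ∈ A, f s = phaseForcing ζ θ₀ s := fun s hs ↦ by
    have hφs : φ s = 0 := by rw [h s hs.1, integral_undef hs.2, mul_zero]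
    simp only [f, phaseForcing, Pi.add_apply, hφs, add_zero]
  have hA_down : ∀ u ∈ A, ∀ s, 0 ≤ s → s ≤ u → s ∈ A := fun u hu s hs hsu ↦
    ⟨hs, fun hint ↦ hu.2 (hint.mono_set (Ioi_subset_Ioi hsu))⟩
  have hf₀ : IntegrableOn (phaseForcing ζ θ₀) (Ioi t) :=
    (integrable_phaseForcing hD hζD hζ hθ₀).integrableOn
  by_contra hf
  have htA : t ∈ A := ⟨ht, hf⟩
  by_cases hbdd : BddAbove A
  · have hta : t ≤ sSup A := le_csSup hbdd htA
    have hIoi : IntegrableOn f (Ioi (sSup A)) := by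
      refine integrableOn_Ioi_of_forall_gt hD.integrableOn
        (fun s _ ↦ (abs_phaseForcing_le s).trans (hζD s)) fun b hb ↦ ?_
      by_contra hfb
      exact (le_csSup hbdd ⟨(ht.trans hta).trans hb.le, hfb⟩).not_gt hb
    have hIoo : IntegrableOn f (Ioo t (sSup A)) := by
      refine (hf₀.mono_set Ioo_subset_Ioi_self).congr_fun (fun s hs ↦ ?_) measurableSet_Ioo
      obtain ⟨u, hu, hsu⟩ := exists_lt_of_lt_csSup ⟨t, htA⟩ hs.2
      exact (hfA s (hA_down u hu s (ht.trans hs.1.le) hsu.le)).symm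
    rw [← Ioc_union_Ioi_eq_Ioi hta] at hf
    exact hf (((integrableOn_Ioc_iff_integrableOn_Ioo (f := f) (μ := volume)).2 hIoo).union hIoi)
  · refine hf (hf₀.congr_fun (fun s hs ↦ ?_) measurableSet_Ioi)
    obtain ⟨u, hu, hsu⟩ := not_bddAbove_iff.1 hbdd s
    exact (hfA s (hA_down u hu s (ht.trans (le_of_lt hs)) hsu.le)).symm

lemma eqOn_Ici (hφ : IsPhaseCorrection μ ζ θ₀ φ) (hψ : IsPhaseCorrection μ ζ θ₀ ψ)
    (hζ : Measurable ζ) (hθ₀ : Measurable θ₀) (hq : |μ| * ∫ s, D s < 1) : EqOn φ ψ (Ici 0) := by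
  have hD0 : ∀ s, 0 ≤ D s := fun s ↦ (norm_nonneg _).trans (hζD s)
  have hDtail : ∀ u, ∫ s in Ioi u, D s ≤ ∫ s, D s := fun u ↦
    setIntegral_le_integral hD (ae_of_all _ hD0)
  have hbdd : BddAbove (range fun u : Ici (0 : ℝ) ↦ |φ u - ψ u|) := by
    refine ⟨2 * (|μ| * ∫ s, D s), forall_mem_range.2 fun u ↦ ?_⟩
    have hφu := (hφ.abs_le hD hζD u.2).trans (mul_le_mul_of_nonneg_left (hDtail u) (abs_nonneg μ))
    have hψu := (hψ.abs_le hD hζD u.2).trans (mul_le_mul_of_nonneg_left (hDtail u) (abs_nonneg μ))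
    linarith [abs_sub (φ u) (ψ u)]
  set M := ⨆ u : Ici (0 : ℝ), |φ u - ψ u|
  have hM : ∀ u, 0 ≤ u → |φ u - ψ u| ≤ M := fun u hu ↦ le_ciSup hbdd ⟨u, hu⟩
  have hM0 : 0 ≤ M := (abs_nonneg _).trans (hM 0 le_rfl)
  have hcontr : M ≤ (|μ| * ∫ s, D s) * M := ciSup_le fun ⟨u, hu⟩ ↦ by
    rw [hφ u hu, hψ u hu, ← mul_sub, abs_mul]
    have hsub := abs_setIntegral_phaseForcing_sub_le hD hζD
      (hφ.integrableOn_phaseForcing hD hζD hζ hθ₀ hu)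
      (hψ.integrableOn_phaseForcing hD hζD hζ hθ₀ hu) (M := M)
      (fun s hs ↦ by simpa using hM s (hu.trans hs.le))
    calc |μ| * |(∫ s in Ioi u, phaseForcing ζ (θ₀ + φ) s) - ∫ s in Ioi u, phaseForcing ζ (θ₀ + ψ) s|
        ≤ |μ| * (M * ∫ s, D s) := by
          gcongr
          exact hsub.trans (mul_le_mul_of_nonneg_left (hDtail u) hM0)
      _ = (|μ| * ∫ s, D s) * M := by ring
  have hM_nonpos : M ≤ 0 := by nlinarith
  exact fun u hu ↦ sub_eq_zero.1 (abs_nonpos_iff.1 ((hM u hu).trans hM_nonpos))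

end IsPhaseCorrection

lemma exists_isPhaseCorrection (hζ : Measurable ζ) (hθ₀ : Measurable θ₀)
    (hq : |μ| * ∫ s, D s < 1) : ∃ φ, IsPhaseCorrection μ ζ θ₀ φ := by
  set κ := |μ| * ∫ s, D s
  have hD0 : ∀ s, 0 ≤ D s := fun s ↦ (norm_nonneg _).trans (hζD s)
  have hκ : 0 ≤ κ := mul_nonneg (abs_nonneg μ) (integral_nonneg hD0)
  have hint : ∀ φ : ℝ →ᵇ ℝ, Integrable (phaseForcing ζ (θ₀ + φ)) := fun φ ↦
    integrable_phaseForcing hD hζD hζ (hθ₀.add φ.continuous.measurable)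
  have hbound : ∀ φ : ℝ →ᵇ ℝ, ∀ t, ‖μ * ∫ s in Ioi t, phaseForcing ζ (θ₀ + φ) s‖ ≤ κ :=
    fun φ t ↦ by
      rw [Real.norm_eq_abs, abs_mul]
      exact mul_le_mul_of_nonneg_left ((abs_setIntegral_phaseForcing_le hD hζD t).trans
        (setIntegral_le_integral hD (ae_of_all _ hD0))) (abs_nonneg μ)
  let T : (ℝ →ᵇ ℝ) → ℝ →ᵇ ℝ := fun φ ↦
    .ofNormedAddCommGroup (fun t ↦ μ * ∫ s in Ioi t, phaseForcing ζ (θ₀ + φ) s)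
      (continuous_const.mul (hint φ).continuous_setIntegral_Ioi) κ (hbound φ)
  have hT : ContractingWith κ.toNNReal T := by
    refine ⟨by rwa [← NNReal.coe_lt_one, Real.coe_toNNReal _ hκ], ?_⟩
    refine LipschitzWith.of_dist_le_mul fun φ ψ ↦ ?_
    rw [Real.coe_toNNReal _ hκ]
    refine (BoundedContinuousFunction.dist_le (by positivity)).2 fun t ↦ ?_
    change |μ * _ - μ * _| ≤ _
    rw [← mul_sub, abs_mul, mul_assoc]
    refine mul_le_mul_of_nonneg_left ?_ (abs_nonneg μ)
    refine (abs_setIntegral_phaseForcing_sub_le hD hζD (hint φ).integrableOn (hint ψ).integrableOn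
      (M := dist φ ψ) fun s _ ↦ ?_).trans ?_
    · simpa [Real.dist_eq] using BoundedContinuousFunction.dist_coe_le_dist (f := φ) (g := ψ) s
    · rw [mul_comm]
      exact mul_le_mul_of_nonneg_right (setIntegral_le_integral hD (ae_of_all _ hD0)) dist_nonneg
  exact ⟨⇑(ContractingWith.fixedPoint T hT),
    fun t _ ↦ (DFunLike.congr_fun hT.fixedPoint_isFixedPt t).symm⟩

end PhaseCorrection

section WeightedNorms

variable {γ K N t : ℝ} {z : ℝ → ℂ} {h : ℝ → ℝ → ℝ → ℂ}

lemma le_polyNormZ (hz : PolyBddZ γ z) (ht : 0 ≤ t) : ‖z t‖ * jap t ^ γ ≤ polyNormZ γ z :=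
  le_ciSup hz ⟨t, ht⟩

lemma polyNormZ_nonneg (hz : PolyBddZ γ z) : 0 ≤ polyNormZ γ z :=
  (mul_nonneg (norm_nonneg _) (Real.rpow_nonneg (jap_pos 0).le γ)).trans (le_polyNormZ hz le_rfl)

lemma norm_le_polyNormZ_mul (hz : PolyBddZ γ z) (ht : 0 ≤ t) :
    ‖z t‖ ≤ polyNormZ γ z * jap t ^ (-γ) := by
  rw [Real.rpow_neg (jap_pos t).le, ← div_eq_mul_inv,
    le_div_iff₀ (Real.rpow_pos_of_pos (jap_pos t) γ)]
  exact le_polyNormZ hz ht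

lemma polyBddH_of_le (hK : ∀ t, 0 ≤ t → ∀ ϑ ω, ‖h t ϑ ω‖ * jap t ^ γ ≤ K) : PolyBddH γ h :=
  ⟨K, forall_mem_range.2 fun p ↦ hK p.1.1 p.1.2 p.2.1 p.2.2⟩

lemma polyNormH_le (hK : ∀ t, 0 ≤ t → ∀ ϑ ω, ‖h t ϑ ω‖ * jap t ^ γ ≤ K) : polyNormH γ h ≤ K :=
  haveI : Nonempty {t : ℝ // 0 ≤ t} := ⟨⟨0, le_rfl⟩⟩
  ciSup_le fun p ↦ hK p.1.1 p.1.2 p.2.1 p.2.2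

def decayMajorant (γ N : ℝ) : ℝ → ℝ :=
  (Ioi 0).indicator fun s ↦ N * jap s ^ (-γ)

lemma integrable_decayMajorant (hγ : 1 < γ) (N : ℝ) : Integrable (decayMajorant γ N) :=
  ((integrable_jap_rpow_neg hγ).const_mul N).indicator measurableSet_Ioi

lemma norm_indicator_le_decayMajorant (hz : PolyBddZ γ z) (s : ℝ) :
    ‖(Ioi 0).indicator z s‖ ≤ decayMajorant γ (polyNormZ γ z) s := by
  by_cases hs : s ∈ Ioi 0
  · simpa [decayMajorant, hs] using norm_le_polyNormZ_mul hz (le_of_lt hs)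
  · simp [decayMajorant, hs]

lemma setIntegral_Ioi_decayMajorant_le (hγ : 2 ≤ γ) (hN : 0 ≤ N) (ht : 0 ≤ t) :
    ∫ s in Ioi t, decayMajorant γ N s ≤ √2 ^ γ * N * jap t ^ (1 - γ) := by
  rw [decayMajorant, setIntegral_indicator measurableSet_Ioi,
    inter_eq_left.2 (Ioi_subset_Ioi ht), integral_const_mul, mul_comm (√2 ^ γ), mul_assoc]
  exact mul_le_mul_of_nonneg_left (setIntegral_Ioi_jap_rpow_neg_le hγ ht) hN

lemma integral_decayMajorant_le (hγ : 2 ≤ γ) (hN : 0 ≤ N) :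
    ∫ s, decayMajorant γ N s ≤ √2 ^ γ * N := by
  have h := setIntegral_Ioi_decayMajorant_le hγ hN le_rfl
  rwa [jap_zero, Real.one_rpow, mul_one, decayMajorant, setIntegral_indicator measurableSet_Ioi,
    inter_self, ← integral_indicator measurableSet_Ioi] at h

end WeightedNorms

lemma IsPhaseCorrection.abs_mul_jap_rpow_le {γ μ t : ℝ} {z : ℝ → ℂ} {θ₀ φ : ℝ → ℝ}
    (h : IsPhaseCorrection μ ((Ioi 0).indicator z) θ₀ φ) (hγ : 2 ≤ γ) (hz : PolyBddZ γ z)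
    (ht : 0 ≤ t) : |φ t| * jap t ^ (γ - 1) ≤ √2 ^ γ * |μ| * polyNormZ γ z := by
  have hφ := h.abs_le (integrable_decayMajorant (by linarith) _)
    (norm_indicator_le_decayMajorant hz) ht
  calc |φ t| * jap t ^ (γ - 1)
      ≤ (|μ| * (√2 ^ γ * polyNormZ γ z * jap t ^ (1 - γ))) * jap t ^ (γ - 1) := by
        refine mul_le_mul_of_nonneg_right (hφ.trans (mul_le_mul_of_nonneg_left ?_ (abs_nonneg μ)))
          (Real.rpow_nonneg (jap_pos t).le _)
        exact setIntegral_Ioi_decayMajorant_le hγ (polyNormZ_nonneg hz) ht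
    _ = √2 ^ γ * |μ| * polyNormZ γ z * (jap t ^ (1 - γ) * jap t ^ (γ - 1)) := by ring
    _ = √2 ^ γ * |μ| * polyNormZ γ z := by
        rw [← Real.rpow_add (jap_pos t), sub_add_sub_cancel', sub_self, Real.rpow_zero, mul_one]

lemma isAsymChar_iff {μ : ℝ} {z : ℝ → ℂ} {Θ : ℝ → ℝ → ℝ → ℝ} :
    IsAsymChar μ z Θ ↔ ∀ ϑ ω, IsPhaseCorrection μ ((Ioi 0).indicator z) (fun s ↦ ϑ + ω * s)
      (fun s ↦ Θ s ϑ ω - ϑ - ω * s) := by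
  have hphase : ∀ ϑ ω : ℝ, ((fun s ↦ ϑ + ω * s) + fun s ↦ Θ s ϑ ω - ϑ - ω * s) =
      fun s ↦ Θ s ϑ ω := fun ϑ ω ↦ funext fun s ↦ by simp only [Pi.add_apply]; ring
  have hint : ∀ t, 0 ≤ t → ∀ θ : ℝ → ℝ, ∫ s in Ioi t, phaseForcing ((Ioi 0).indicator z) θ s =
      ∫ s in Ioi t, phaseForcing z θ s := fun t ht θ ↦
    setIntegral_congr_fun measurableSet_Ioi fun s hs ↦ by
      simp [phaseForcing, indicator_of_mem (show s ∈ Ioi 0 from ht.trans_lt hs)]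
  refine ⟨fun h ϑ ω t ht ↦ ?_, fun h t ht ϑ ω ↦ ?_⟩
  · dsimp only
    rw [hphase, hint t ht, h t ht ϑ ω]
    simp only [phaseForcing]
    ring
  · have := h ϑ ω t ht
    rw [hphase, hint t ht] at this
    simp only [phaseForcing] at this
    linarith

/-- Existence and uniqueness of the asymptotic characteristic for `z` in the
polynomially-weighted space, with the bound `‖Θ - ϑ - ωt‖_{(γ-1)} ≤ Cμ‖z‖_{(γ)}`. -/
theorem asymChar_exists_unique_poly
    (γ : ℝ) (hγ : 2 ≤ γ) :
    ∃ C > (0 : ℝ), ∀ z : ℝ → ℂ, Measurable z → PolyBddZ γ z →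
      ∀ μ : ℝ, 0 < μ → C * μ * polyNormZ γ z < 1 →
        ∃ Θ : ℝ → ℝ → ℝ → ℝ,
          PolyBddH (γ - 1) (fun t ϑ ω => ((Θ t ϑ ω - ϑ - ω * t : ℝ) : ℂ)) ∧
          IsAsymChar μ z Θ ∧
          polyNormH (γ - 1) (fun t ϑ ω => ((Θ t ϑ ω - ϑ - ω * t : ℝ) : ℂ)) ≤
            C * μ * polyNormZ γ z ∧
          ∀ Θ' : ℝ → ℝ → ℝ → ℝ,
            PolyBddH (γ - 1) (fun t ϑ ω => ((Θ' t ϑ ω - ϑ - ω * t : ℝ) : ℂ)) →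
            IsAsymChar μ z Θ' →
            ∀ t : ℝ, 0 ≤ t → ∀ ϑ ω : ℝ, Θ' t ϑ ω = Θ t ϑ ω := by
  refine ⟨√2 ^ γ, by positivity, fun z hz hzb μ hμ hsmall ↦ ?_⟩
  have hζ : Measurable ((Ioi 0).indicator z) := hz.indicator measurableSet_Ioi
  have hD := integrable_decayMajorant (γ := γ) (by linarith) (polyNormZ γ z)
  have hζD := norm_indicator_le_decayMajorant hzb
  have hq : |μ| * ∫ s, decayMajorant γ (polyNormZ γ z) s < 1 := by
    rw [abs_of_pos hμ]
    calc μ * ∫ s, decayMajorant γ (polyNormZ γ z) s ≤ μ * (√2 ^ γ * polyNormZ γ z) :=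
          mul_le_mul_of_nonneg_left (integral_decayMajorant_le hγ (polyNormZ_nonneg hzb)) hμ.le
      _ < 1 := by linarith
  choose φ hφ using fun ϑ ω : ℝ ↦
    exists_isPhaseCorrection hD hζD hζ (θ₀ := fun s ↦ ϑ + ω * s) (by fun_prop) hq
  have hΘ : ∀ t ϑ ω : ℝ, ϑ + ω * t + φ ϑ ω t - ϑ - ω * t = φ ϑ ω t := fun _ _ _ ↦ by ring
  have hdecay : ∀ t, 0 ≤ t → ∀ ϑ ω : ℝ,
      ‖((ϑ + ω * t + φ ϑ ω t - ϑ - ω * t : ℝ) : ℂ)‖ * jap t ^ (γ - 1) ≤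
        √2 ^ γ * μ * polyNormZ γ z := fun t ht ϑ ω ↦ by
    simpa only [hΘ, Complex.norm_real, Real.norm_eq_abs, abs_of_pos hμ] using
      (hφ ϑ ω).abs_mul_jap_rpow_le hγ hzb ht
  refine ⟨fun t ϑ ω ↦ ϑ + ω * t + φ ϑ ω t, polyBddH_of_le hdecay,
    isAsymChar_iff.2 fun ϑ ω ↦ by simpa only [hΘ] using hφ ϑ ω, polyNormH_le hdecay, ?_⟩
  intro Θ' _ hΘ' t ht ϑ ω
  have := (hφ ϑ ω).eqOn_Ici hD hζD (isAsymChar_iff.1 hΘ' ϑ ω) hζ (by fun_prop) hq ht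
  simp only at this ⊢
  linarith
end
end
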